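/- arXiv:1803.04170 — 7 statements merged into one kernel-verified Lean document; each statement's English description precedes it below -/
import Mathlib

section
/- Let A be a d × n integer matrix, b ∈ ℤᵈ, c ∈ ℝⁿ with nonnegative entries, and g ∈ (ℝ_{>0})ᵈ. Define g·c ∈ ℝⁿ by (g·c)_j := c_j ∏_{i=1}^d g_i^{a_{ij}}, and let J(c) := {j : c_j ≠ 0}. Suppose the sum D(c) := Σ_{y ∈ ℤ_{≥0}ⁿ, Ay = b, y_j = 0 for all j ∉ J(c)} ∏_{j ∈ J(c)} c_j^{y_j}/y_j! satisfies 0 < D(c) < ∞. Then for every x ∈ ℤ_{≥0}ⁿ with Ax = b and x_j = 0 for all j ∉ J(c), the ratio (∏_{j ∈ J(c)} (g·c)_j^{x_j}/x_j!) / D(g·c) equals (∏_{j ∈ J(c)} c_j^{x_j}/x_j!) / D(c). In other words, the probability mass function of the A-distribution with parameter c is invariant under the action c ↦ g·c. -/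
noncomputable section

/-- The term `∏_{j ∈ J(c)} v_j^{y_j} / y_j!`, where `J(c) = {j : c_j ≠ 0}`. -/
def Aterm {n : ℕ} (c v : Fin n → ℝ) (y : Fin n → ℕ) : ℝ :=
  ∏ j ∈ Finset.univ.filter (fun j => c j ≠ 0), v j ^ (y j) / (Nat.factorial (y j) : ℝ)

/-- The normalizing sum `D(v) = Σ_{y ≥ 0, Ay = b, y_j = 0 for j ∉ J(c)} ∏_{j∈J(c)} v_j^{y_j}/y_j!`. -/
def Dsum {d n : ℕ} (A : Matrix (Fin d) (Fin n) ℤ) (b : Fin d → ℤ) (c v : Fin n → ℝ) : ℝ :=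
  ∑' y : {y : Fin n → ℕ // (A.mulVec fun j => ((y j : ℤ))) = b ∧ ∀ j, c j = 0 → y j = 0},
    Aterm c v y.1

/-!
Scaling `c` to `g·c` multiplies the term of every `y` with `Ay = b` by the same factor
`∏_j (∏_i g_i^{a_ij})^{y_j} = ∏_i g_i^{(Ay)_i} = ∏_i g_i^{b_i}`, so it multiplies `D(c)` by that
factor too (also when the series diverges and `tsum` is junk `0`), and the factor cancels in the
ratio.
-/

theorem zpow_sum₀ {ι G₀ : Type*} [CommGroupWithZero G₀] {x : G₀} (hx : x ≠ 0)
    (s : Finset ι) (f : ι → ℤ) : x ^ (∑ j ∈ s, f j) = ∏ j ∈ s, x ^ f j := by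
  classical
  induction s using Finset.cons_induction with
  | empty => simp
  | cons a s _ ih => rw [Finset.sum_cons, Finset.prod_cons, zpow_add₀ hx, ih]

theorem prod_zpow_mulVec {m n G₀ : Type*} [Fintype m] [Fintype n] [CommGroupWithZero G₀]
    (A : Matrix m n ℤ) {g : m → G₀} (hg : ∀ i, g i ≠ 0) (y : n → ℤ) :
    ∏ i, g i ^ A.mulVec y i = ∏ j, (∏ i, g i ^ A i j) ^ y j := by
  simp only [Matrix.mulVec, dotProduct, zpow_sum₀ (hg _), ← Finset.prod_zpow, ← zpow_mul]
  exact Finset.prod_comm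

theorem Aterm_eq_prod_univ {n : ℕ} {c : Fin n → ℝ} (v : Fin n → ℝ) {y : Fin n → ℕ}
    (hy : ∀ j, c j = 0 → y j = 0) :
    Aterm c v y = ∏ j, v j ^ y j / (y j).factorial := by
  refine Finset.prod_subset (Finset.filter_subset _ _) fun j _ hj => ?_
  simp [hy j (by simpa using hj)]

theorem Aterm_smul {d n : ℕ} (A : Matrix (Fin d) (Fin n) ℤ) {c : Fin n → ℝ}
    {g : Fin d → ℝ} (hg : ∀ i, g i ≠ 0) {y : Fin n → ℕ} (hy : ∀ j, c j = 0 → y j = 0) :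
    Aterm c (fun j => c j * ∏ i, g i ^ A i j) y =
      (∏ i, g i ^ A.mulVec (fun j => (y j : ℤ)) i) * Aterm c c y := by
  rw [Aterm_eq_prod_univ _ hy, Aterm_eq_prod_univ _ hy, prod_zpow_mulVec A hg,
    ← Finset.prod_mul_distrib]
  refine Finset.prod_congr rfl fun j _ => ?_
  rw [zpow_natCast, mul_pow]
  ring

theorem Dsum_smul {d n : ℕ} (A : Matrix (Fin d) (Fin n) ℤ) (b : Fin d → ℤ) (c : Fin n → ℝ)
    {g : Fin d → ℝ} (hg : ∀ i, g i ≠ 0) :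
    Dsum A b c (fun j => c j * ∏ i, g i ^ A i j) = (∏ i, g i ^ b i) * Dsum A b c c := by
  rw [Dsum, Dsum, ← tsum_mul_left]
  refine tsum_congr fun y => ?_
  rw [Aterm_smul A hg y.2.2, y.2.1]

theorem Adist_pmf_invariant_general {d n : ℕ} (A : Matrix (Fin d) (Fin n) ℤ) (b : Fin d → ℤ)
    (c : Fin n → ℝ) (g : Fin d → ℝ) (hg : ∀ i, 0 < g i) :
    ∀ x : Fin n → ℕ, (A.mulVec fun j => ((x j : ℤ))) = b → (∀ j, c j = 0 → x j = 0) →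
      Aterm c (fun j => c j * ∏ i, g i ^ (A i j)) x /
          Dsum A b c (fun j => c j * ∏ i, g i ^ (A i j)) =
        Aterm c c x / Dsum A b c c := by
  intro x hx hx0
  have hg₀ : ∀ i, g i ≠ 0 := fun i => (hg i).ne'
  have hfactor : ∏ i, g i ^ b i ≠ 0 :=
    Finset.prod_ne_zero_iff.mpr fun i _ => zpow_ne_zero _ (hg₀ i)
  rw [Dsum_smul A b c hg₀, Aterm_smul A hg₀ hx0, hx, mul_div_mul_left _ _ hfactor]

/-- The probability mass function of the `A`-distribution is invariant under
the action `c ↦ g·c` of `(ℝ_{>0})ᵈ`, where `(g·c)_j = c_j ∏_i g_i^{a_{ij}}`. -/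
theorem Adist_pmf_invariant {d n : ℕ} (A : Matrix (Fin d) (Fin n) ℤ) (b : Fin d → ℤ)
    (c : Fin n → ℝ) (hc : ∀ j, 0 ≤ c j) (g : Fin d → ℝ) (hg : ∀ i, 0 < g i)
    (hsummable : Summable (fun y :
      {y : Fin n → ℕ // (A.mulVec fun j => ((y j : ℤ))) = b ∧ ∀ j, c j = 0 → y j = 0} =>
        Aterm c c y.1))
    (hpos : 0 < Dsum A b c c) :
    ∀ x : Fin n → ℕ, (A.mulVec fun j => ((x j : ℤ))) = b → (∀ j, c j = 0 → x j = 0) →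
      Aterm c (fun j => c j * ∏ i, g i ^ (A i j)) x /
          Dsum A b c (fun j => c j * ∏ i, g i ^ (A i j)) =
        Aterm c c x / Dsum A b c c :=
  Adist_pmf_invariant_general A b c g hg
end
end

section
/- Let V and W be finite-dimensional real vector spaces (with their canonical topologies and Borel σ-algebras), let V ⊕ W be their direct sum, let π : V ⊕ W → V be the projection onto V, and let V* be the dual space of V. Then {B ∈ B(V ⊕ W) : B + W = B} = σ(f ∘ π : f ∈ V*); that is, the collection of Borel subsets of V ⊕ W invariant under translation by W equals the σ-algebra generated by the compositions of continuous linear functionals on V with the projection π. -/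
open MeasureTheory
open scoped Pointwise

lemma borel_eq_iSup_comap_dual {V : Type*} [NormedAddCommGroup V] [NormedSpace ℝ V]
    [FiniteDimensional ℝ V] :
    borel V = ⨆ f : V →L[ℝ] ℝ, MeasurableSpace.comap f (borel ℝ) := by
  apply le_antisymm
  · -- use the continuous linear equiv to Euclidean space
    letI : MeasurableSpace V := borel V
    haveI : BorelSpace V := ⟨rfl⟩
    set e := toEuclidean (E := V) with he
    intro s hs
    have hse : s = e ⁻¹' (e.symm ⁻¹' s) := by
      ext x; simp
    have hmeas : MeasurableSet (e.symm ⁻¹' s) :=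
      e.symm.continuous.measurable hs
    rw [hse]
    have : MeasurableSet[MeasurableSpace.comap e (WithLp.measurableSpace 2 _)] (e ⁻¹' (e.symm ⁻¹' s)) :=
      ⟨_, hmeas, rfl⟩
    refine (show MeasurableSpace.comap e (WithLp.measurableSpace 2 _)
        ≤ ⨆ f : V →L[ℝ] ℝ, MeasurableSpace.comap f (borel ℝ) from ?_) _ this
    rw [WithLp.measurableSpace, MeasurableSpace.comap_comp, MeasurableSpace.pi,
      MeasurableSpace.comap_iSup]
    refine iSup_le fun i => ?_
    rw [MeasurableSpace.comap_comp]
    exact le_iSup_of_le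
      (((EuclideanSpace.proj i : EuclideanSpace ℝ (Fin (Module.finrank ℝ V)) →L[ℝ] ℝ).comp
        (e : V →L[ℝ] EuclideanSpace ℝ (Fin (Module.finrank ℝ V))))) le_rfl
  · refine iSup_le fun f => ?_
    letI : MeasurableSpace V := borel V
    haveI : BorelSpace V := ⟨rfl⟩
    exact MeasurableSpace.comap_le_iff_le_map.2 f.continuous.measurable

/-- Let `V` and `W` be finite-dimensional real vector spaces, `V ⊕ W`
(realized as `V × W`) their direct sum with its Borel σ-algebra, `π : V ⊕ W → V` the
projection, and `V*` the dual space of `V`.  The Borel subsets of `V ⊕ W` invariant under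
translation by `W` (identified with `{0} × W`) are exactly the sets of the σ-algebra
generated by the maps `f ∘ π`, `f ∈ V*`. -/
theorem translationInvariant_eq_comap_dual {V W : Type*}
    [NormedAddCommGroup V] [NormedSpace ℝ V] [FiniteDimensional ℝ V]
    [NormedAddCommGroup W] [NormedSpace ℝ W] [FiniteDimensional ℝ W]
    [MeasurableSpace (V × W)] [BorelSpace (V × W)] (B : Set (V × W)) :
    (MeasurableSet B ∧ B + (({0} : Set V) ×ˢ (Set.univ : Set W)) = B) ↔
      MeasurableSet[⨆ f : V →L[ℝ] ℝ,
        MeasurableSpace.comap (fun p : V × W => f p.1)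
          (inferInstance : MeasurableSpace ℝ)] B := by
  letI : MeasurableSpace V := borel V
  haveI : BorelSpace V := ⟨rfl⟩
  have hM : (⨆ f : V →L[ℝ] ℝ,
      MeasurableSpace.comap (fun p : V × W => f p.1)
        (inferInstance : MeasurableSpace ℝ))
      = MeasurableSpace.comap (Prod.fst : V × W → V) (borel V) := by
    rw [borel_eq_iSup_comap_dual, MeasurableSpace.comap_iSup]
    congr 1
    ext f
    rw [MeasurableSpace.comap_comp]
  rw [hM, MeasurableSpace.measurableSet_comap]
  constructor
  · rintro ⟨hB, hinv⟩
    refine ⟨(fun v : V => (v, (0 : W))) ⁻¹' B, ?_, ?_⟩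
    · exact (Continuous.prodMk continuous_id continuous_const).measurable hB
    · ext p
      simp only [Set.mem_preimage]
      constructor
      · intro h
        have : (p.1, (0 : W)) + ((0 : V), p.2) ∈ B := by
          rw [← hinv]
          exact Set.add_mem_add h (by simp)
        simpa using this
      · intro h
        have h2 : p + ((0 : V), -p.2) ∈ B := by
          rw [← hinv]
          exact Set.add_mem_add h (by simp)
        have heq : p + ((0 : V), -p.2) = (p.1, (0 : W)) := by
          simp [Prod.ext_iff]
        rwa [heq] at h2
  · rintro ⟨A, hA, rfl⟩
    constructor
    · exact continuous_fst.measurable hA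
    · ext p
      constructor
      · rintro ⟨b, hb, s, hs, rfl⟩
        simp only [Set.mem_prod, Set.mem_singleton_iff] at hs
        simpa [hs.1] using hb
      · intro h
        exact ⟨p, h, 0, by simp, by simp⟩
end

section
/- Let A be a d × n real matrix and z ∈ {0,1}ⁿ with J(z) := {j : z_j = 1}. Let ℝ^{J(z)} := span{e_j : j ∈ J(z)} ⊆ ℝⁿ where {e_1,…,e_n} is the standard basis, let p_z : ℝⁿ → ℝ^{J(z)} be the coordinate projection, and let ι̂_z : ℝ^{J(z)} → ℝⁿ be the inclusion. For α ∈ ℝⁿ, let L_α : ℝⁿ → ℝ be L_α(x) := Σ_{j=1}^n α_j x_j. Then {B ∈ B(ℝ^{J(z)}) : B + p_z(Im Aᵀ) = B} = σ(L_α ∘ ι̂_z : α ∈ ℝ^{J(z)} ∩ ker A); that is, the Borel subsets of ℝ^{J(z)} invariant under translation by p_z(Im Aᵀ) form exactly the σ-algebra generated by the linear functionals L_α ∘ ι̂_z with α ranging over ℝ^{J(z)} ∩ ker A. -/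
open MeasureTheory
open scoped Pointwise

section Aux

open Matrix

namespace TIK

variable {d n : ℕ}

private lemma sum_off_support {n : ℕ} (z : Fin n → ℝ) (g : Fin n → ℝ)
    (hg : ∀ j, z j ≠ 1 → g j = 0) :
    ∑ j : Fin n, g j = ∑ i : {j : Fin n // z j = 1}, g i.1 := by
  classical
  rw [← Finset.sum_filter_of_ne (fun x _ hx => by
      by_contra h; exact hx (hg x h)),
    Finset.sum_subtype (p := fun j => z j = 1)
      (Finset.univ.filter fun j => z j = 1) (fun x => by simp) g]

/-- extension by zero -/
noncomputable def ext (z : Fin n → ℝ) (β : {j : Fin n // z j = 1} → ℝ) : Fin n → ℝ :=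
  fun j => if h : z j = 1 then β ⟨j, h⟩ else 0

/-- the functional `L_α ∘ ι̂_z` -/
noncomputable def F (z : Fin n → ℝ) (α : Fin n → ℝ) (x : {j : Fin n // z j = 1} → ℝ) : ℝ :=
  ∑ j : Fin n, α j * (if h : z j = 1 then x ⟨j, h⟩ else 0)

def S (A : Matrix (Fin d) (Fin n) ℝ) (z : Fin n → ℝ) : Set (Fin n → ℝ) :=
  {α : Fin n → ℝ | (∀ j, z j ≠ 1 → α j = 0) ∧ A.mulVec α = 0}

def W' (A : Matrix (Fin d) (Fin n) ℝ) (z : Fin n → ℝ) : Set ({j : Fin n // z j = 1} → ℝ) :=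
  (fun v : Fin n → ℝ => fun j : {j : Fin n // z j = 1} => v j.1) ''
    Set.range (A.transpose.mulVec)

noncomputable def Wsub (A : Matrix (Fin d) (Fin n) ℝ) (z : Fin n → ℝ) :
    Submodule ℝ ({j : Fin n // z j = 1} → ℝ) :=
  (LinearMap.range A.transpose.mulVecLin).map
    (LinearMap.funLeft ℝ ℝ (Subtype.val : {j : Fin n // z j = 1} → Fin n))

noncomputable def M (A : Matrix (Fin d) (Fin n) ℝ) (z : Fin n → ℝ) :
    MeasurableSpace ({j : Fin n // z j = 1} → ℝ) :=
  ⨆ α ∈ S A z,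
    MeasurableSpace.comap
      (fun x : {j : Fin n // z j = 1} → ℝ =>
        ∑ j : Fin n, α j * (if h : z j = 1 then x ⟨j, h⟩ else 0))
      (inferInstance : MeasurableSpace ℝ)

lemma W'_coe (A : Matrix (Fin d) (Fin n) ℝ) (z : Fin n → ℝ) :
    W' A z = ↑(Wsub A z) := by
  rw [Wsub, Submodule.map_coe, LinearMap.coe_range]
  have h : ⇑(A.transpose.mulVecLin) = A.transpose.mulVec :=
    funext fun v => Matrix.mulVecLin_apply _ _
  rw [h]
  rfl

lemma F_ext_apply (z : Fin n → ℝ) (β x : {j : Fin n // z j = 1} → ℝ) :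
    F z (ext z β) x = ∑ i, β i * x i := by
  rw [F]
  have h1 : ∀ j : Fin n, ext z β j * (if h : z j = 1 then x ⟨j, h⟩ else 0) =
      if h : z j = 1 then β ⟨j, h⟩ * x ⟨j, h⟩ else 0 := by
    intro j; rw [ext]; split_ifs <;> simp
  rw [Finset.sum_congr rfl fun j _ => h1 j,
    sum_off_support z _ (fun j hj => dif_neg hj)]
  exact Finset.sum_congr rfl fun i _ => by rw [dif_pos i.2]

lemma dot_ext (z : Fin n → ℝ) (β : {j : Fin n // z j = 1} → ℝ) (v : Fin n → ℝ) :
    ext z β ⬝ᵥ v = ∑ i : {j : Fin n // z j = 1}, β i * v i.1 := by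
  rw [dotProduct,
    sum_off_support z _ (fun j hj => by rw [ext, dif_neg hj, zero_mul])]
  exact Finset.sum_congr rfl fun i _ => by rw [ext, dif_pos i.2]

lemma F_proj (z : Fin n → ℝ) (α : Fin n → ℝ) (hα : ∀ j, z j ≠ 1 → α j = 0)
    (v : Fin n → ℝ) :
    F z α (fun j : {j : Fin n // z j = 1} => v j.1) = α ⬝ᵥ v := by
  rw [F, dotProduct]
  refine Finset.sum_congr rfl fun j _ => ?_
  by_cases h : z j = 1
  · rw [dif_pos h]
  · rw [dif_neg h, hα j h, zero_mul, zero_mul]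

lemma F_add_invariant (A : Matrix (Fin d) (Fin n) ℝ) (z : Fin n → ℝ)
    {α : Fin n → ℝ} (hα : α ∈ S A z) (x : {j : Fin n // z j = 1} → ℝ)
    {w : {j : Fin n // z j = 1} → ℝ} (hw : w ∈ W' A z) :
    F z α (x + w) = F z α x := by
  obtain ⟨v, ⟨y, rfl⟩, rfl⟩ := hw
  have h1 : ∀ j : Fin n,
      α j * (if h : z j = 1 then (x + fun i : {j : Fin n // z j = 1} =>
          (A.transpose.mulVec y) i.1) ⟨j, h⟩ else 0) =
      α j * (if h : z j = 1 then x ⟨j, h⟩ else 0) +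
      α j * (if h : z j = 1 then (fun i : {j : Fin n // z j = 1} =>
          (A.transpose.mulVec y) i.1) ⟨j, h⟩ else 0) := by
    intro j; split_ifs with h
    · simp [Pi.add_apply, mul_add]
    · simp
  rw [F, Finset.sum_congr rfl fun j _ => h1 j, Finset.sum_add_distrib]
  have h2 : (∑ j : Fin n, α j * (if h : z j = 1 then
      (fun i : {j : Fin n // z j = 1} => (A.transpose.mulVec y) i.1) ⟨j, h⟩ else 0)) = 0 := by
    have := F_proj z α hα.1 (A.transpose.mulVec y)
    rw [F] at this
    rw [this, Matrix.dotProduct_mulVec, Matrix.vecMul_transpose, hα.2,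
      zero_dotProduct]
  rw [F, h2, add_zero]

lemma F_measurable (z : Fin n → ℝ) (α : Fin n → ℝ) : Measurable (F z α) := by
  apply Finset.measurable_sum
  intro j _
  by_cases h : z j = 1
  · simp only [dif_pos h]
    exact (measurable_pi_apply _).const_mul _
  · simp only [dif_neg h, mul_zero]
    exact measurable_const

lemma ext_mem_S (A : Matrix (Fin d) (Fin n) ℝ) (z : Fin n → ℝ)
    (β : {j : Fin n // z j = 1} → ℝ)
    (hβ : ∀ w ∈ Wsub A z, ∑ i, β i * w i = 0) : ext z β ∈ S A z := by
  refine ⟨fun j hj => dif_neg hj, ?_⟩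
  have key : ∀ y : Fin d → ℝ, (A.mulVec (ext z β)) ⬝ᵥ y = 0 := by
    intro y
    rw [← Matrix.vecMul_transpose, ← Matrix.dotProduct_mulVec, dot_ext]
    have hw : (fun i : {j : Fin n // z j = 1} => (A.transpose.mulVec y) i.1) ∈ Wsub A z := by
      have h : (fun i : {j : Fin n // z j = 1} => (A.transpose.mulVec y) i.1) ∈ W' A z :=
        ⟨A.transpose.mulVec y, ⟨y, rfl⟩, rfl⟩
      rwa [W'_coe, SetLike.mem_coe] at h
    exact hβ _ hw
  exact dotProduct_self_eq_zero.mp (key (A.mulVec (ext z β)))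

end TIK

end Aux

open Matrix in
/-- Let `A` be a `d × n` real matrix and `z ∈ {0,1}ⁿ` with
`J(z) = {j : z_j = 1}`.  Realizing `ℝ^{J(z)}` as the function space `{j // z j = 1} → ℝ`,
with `p_z` the coordinate projection and `ι̂_z` the inclusion, the Borel subsets of
`ℝ^{J(z)}` invariant under translation by `p_z(Im Aᵀ)` form exactly the σ-algebra
generated by the functionals `L_α ∘ ι̂_z` with `α ∈ ℝ^{J(z)} ∩ ker A`. -/
theorem translationInvariant_eq_kernel_functionals {d n : ℕ}
    (A : Matrix (Fin d) (Fin n) ℝ) (z : Fin n → ℝ) (hz : ∀ j, z j = 0 ∨ z j = 1)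
    (B : Set ({j : Fin n // z j = 1} → ℝ)) :
    (MeasurableSet B ∧
      B + ((fun v : Fin n → ℝ => fun j : {j : Fin n // z j = 1} => v j.1) ''
        Set.range (A.transpose.mulVec)) = B) ↔
    MeasurableSet[⨆ α ∈ {α : Fin n → ℝ | (∀ j, z j ≠ 1 → α j = 0) ∧ A.mulVec α = 0},
      MeasurableSpace.comap
        (fun x : {j : Fin n // z j = 1} → ℝ =>
          ∑ j : Fin n, α j * (if h : z j = 1 then x ⟨j, h⟩ else 0))
        (inferInstance : MeasurableSpace ℝ)] B := by
  classical
  have hcomap_le : ∀ α ∈ TIK.S A z,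
      MeasurableSpace.comap (TIK.F z α) (inferInstance : MeasurableSpace ℝ) ≤ TIK.M A z := by
    intro α hα
    exact le_iSup₂ (f := fun (α : Fin n → ℝ)
      (_ : α ∈ TIK.S A z) => MeasurableSpace.comap (TIK.F z α)
        (inferInstance : MeasurableSpace ℝ)) α hα
  constructor
  · rintro ⟨hB, hinv⟩
    show MeasurableSet[TIK.M A z] B
    have hmem : ∀ x ∈ B, ∀ w ∈ TIK.Wsub A z, x + w ∈ B := by
      intro x hx w hw
      have hw' : w ∈ TIK.W' A z := by rw [TIK.W'_coe]; exact hw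
      rw [← hinv]
      exact Set.add_mem_add hx hw'
    obtain ⟨U, hU⟩ := (TIK.Wsub A z).exists_isCompl
    set P : ({j : Fin n // z j = 1} → ℝ) →ₗ[ℝ] ({j : Fin n // z j = 1} → ℝ) :=
      U.subtype.comp (U.linearProjOfIsCompl (TIK.Wsub A z) hU.symm) with hPdef
    have hPW : ∀ w ∈ TIK.Wsub A z, P w = 0 := by
      intro w hw
      simp [hPdef]; exact Submodule.projectionOnto_apply_of_mem_right hU.symm hw
    have hsub : ∀ x, x - P x ∈ TIK.Wsub A z := by
      intro x
      have h := Submodule.projection_add_projection_eq_self hU.symm x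
      have : x - P x = ((TIK.Wsub A z).linearProjOfIsCompl U hU x : _) := by
        rw [sub_eq_iff_eq_add]
        nth_rw 1 [← h]
        simp [hPdef, add_comm]
        rfl
      rw [this]
      exact SetLike.coe_mem _
    have hBP : B = P ⁻¹' B := by
      ext x
      constructor
      · intro hx
        have h1 : P x - x = -(x - P x) := by ring
        have h2 : P x - x ∈ TIK.Wsub A z := by
          rw [h1]; exact neg_mem (hsub x)
        have := hmem x hx _ h2
        simpa using this
      · intro hx
        have := hmem (P x) hx _ (hsub x)
        simpa using this
    have hPmeas : MeasurableSpace.comap ⇑P MeasurableSpace.pi ≤ TIK.M A z := by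
      simp_rw [MeasurableSpace.pi, MeasurableSpace.comap_iSup, MeasurableSpace.comap_comp,
        Function.comp_def, iSup_le_iff]
      intro i
      set β : {j : Fin n // z j = 1} → ℝ := fun k => P (Pi.single k (1:ℝ)) i with hβdef
      have hlin : ∀ x, P x i = ∑ k, β k * x k := by
        intro x
        conv_lhs => rw [← Finset.univ_sum_single x, map_sum]
        rw [Finset.sum_apply]
        refine Finset.sum_congr rfl fun k _ => ?_
        have h : (Pi.single k (x k) : {j : Fin n // z j = 1} → ℝ) = x k • (Pi.single k (1:ℝ) : {j : Fin n // z j = 1} → ℝ) := by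
          rw [← Pi.single_smul, smul_eq_mul, mul_one]
        rw [h, _root_.map_smul]
        simp [hβdef, mul_comm]
      have hβW : ∀ w ∈ TIK.Wsub A z, ∑ k, β k * w k = 0 := by
        intro w hw
        rw [← hlin w, hPW w hw]
        rfl
      have hαS : TIK.ext z β ∈ TIK.S A z := TIK.ext_mem_S A z β hβW
      have heq : (fun x : {j : Fin n // z j = 1} → ℝ => P x i) = TIK.F z (TIK.ext z β) :=
        funext fun x => by rw [hlin, TIK.F_ext_apply]
      rw [heq]
      exact hcomap_le _ hαS
    rw [hBP]
    exact hPmeas _ ⟨B, hB, rfl⟩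
  · intro hB
    have hb : MeasurableSet[TIK.M A z] B := hB
    have hW0 : (0 : {j : Fin n // z j = 1} → ℝ) ∈ TIK.W' A z := by
      rw [TIK.W'_coe]; exact zero_mem _
    have hWneg : ∀ w ∈ TIK.W' A z, -w ∈ TIK.W' A z := by
      intro w hw
      rw [TIK.W'_coe] at hw ⊢
      exact neg_mem hw
    set inv : MeasurableSpace ({j : Fin n // z j = 1} → ℝ) :=
      { MeasurableSet' := fun s => ∀ x ∈ s, ∀ w ∈ TIK.W' A z, x + w ∈ s
        measurableSet_empty := fun x hx => hx.elim
        measurableSet_compl := by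
          intro s hs x hx w hw h
          exact hx (by simpa using hs (x + w) h (-w) (hWneg w hw))
        measurableSet_iUnion := by
          intro f hf x hx w hw
          rcases Set.mem_iUnion.mp hx with ⟨i, hi⟩
          exact Set.mem_iUnion.mpr ⟨i, hf i x hi w hw⟩ } with hinvdef
    constructor
    · have hle : TIK.M A z ≤ (MeasurableSpace.pi : MeasurableSpace ({j : Fin n // z j = 1} → ℝ)) :=
        iSup₂_le fun α _ => by exact measurable_iff_comap_le.mp (TIK.F_measurable z α)
      exact hle B hb
    · have hle : TIK.M A z ≤ inv := by
        refine iSup₂_le fun α hα => ?_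
        intro s hs
        obtain ⟨C, -, rfl⟩ := hs
        intro x hx w hw
        show TIK.F z α (x + w) ∈ C
        rw [TIK.F_add_invariant A z hα x hw]
        exact hx
      have hBinv : ∀ x ∈ B, ∀ w ∈ TIK.W' A z, x + w ∈ B := hle B hb
      refine Set.Subset.antisymm ?_ ?_
      · intro a ha
        rcases Set.mem_add.mp ha with ⟨x, hx, w, hw, rfl⟩
        exact hBinv x hx w hw
      · intro x hx
        exact Set.mem_add.mpr ⟨x, hx, 0, hW0, add_zero x⟩
end

section
/- Let A be a d × n integer matrix, Θ := ℝ_{≥0}ⁿ with its Borel σ-algebra, and let G := (ℝ_{>0})ᵈ act on Θ by (g·c)_j := c_j ∏_{i=1}^d g_i^{a_{ij}}. Fix z ∈ {0,1}ⁿ, let Θ_z := {c ∈ Θ : Z(c) = z}, and let ι_z : Θ_z → Θ be the inclusion. Let O** := {B ∈ B(Θ) : G·B = B}. Then ι_z⁻¹ O** ⊆ ι_z⁻¹ σ(R_α : α ∈ ker A), i.e. every trace on Θ_z of a G-invariant Borel subset of Θ is the trace on Θ_z of a set in the σ-algebra generated by the functions R_α with α ∈ ker A. -/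
open MeasureTheory

noncomputable section

/-- The action of `g ∈ (ℝ_{>0})ᵈ` on `Θ = ℝ_{≥0}ⁿ`: `(g·c)_j = c_j ∏_i g_i^{a_{ij}}`. -/
def actA {d n : ℕ} (A : Matrix (Fin d) (Fin n) ℤ) (g : Fin d → NNReal)
    (c : Fin n → NNReal) : Fin n → NNReal :=
  fun j => c j * ∏ i, g i ^ (A i j)

/-- `G·B := {g·c : g ∈ (ℝ_{>0})ᵈ, c ∈ B}` for `B ⊆ Θ = ℝ_{≥0}ⁿ`. -/
def GorbitTheta {d n : ℕ} (A : Matrix (Fin d) (Fin n) ℤ) (B : Set (Fin n → NNReal)) :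
    Set (Fin n → NNReal) :=
  {x | ∃ g : Fin d → NNReal, (∀ i, 0 < g i) ∧ ∃ c ∈ B, x = actA A g c}

/-- `ker A := {α ∈ ℝⁿ : Aα = 0}`. -/
def kerA {d n : ℕ} (A : Matrix (Fin d) (Fin n) ℤ) : Set (Fin n → ℝ) :=
  {α | (A.map (Int.cast : ℤ → ℝ)).mulVec α = 0}

open Classical in
/-- The generalized odds ratio `R_α(c) = ∏_{j ∈ J(α)} c_j^{α_j}` if `c_j ≠ 0` for all
`j ∈ J(α)`, and `0` otherwise, where `J(α) = {j : α_j ≠ 0}`. -/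
def Rfun {n : ℕ} (α : Fin n → ℝ) (c : Fin n → NNReal) : ℝ :=
  if ∀ j, α j ≠ 0 → c j ≠ 0 then
    ∏ j ∈ Finset.univ.filter (fun j => α j ≠ 0), (c j : ℝ) ^ (α j)
  else 0

/-- The zero pattern `Z(c) ∈ {0,1}ⁿ`, `Z_j(c) = 1` iff `c_j > 0`. -/
def Zfun {n : ℕ} (c : Fin n → NNReal) : Fin n → ℝ :=
  fun j => if 0 < c j then 1 else 0

/-! ### Auxiliary lemmas -/

private lemma exp_zpow_aux (x : ℝ) (k : ℤ) : Real.exp x ^ k = Real.exp (k * x) := by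
  rw [← Real.rpow_intCast, ← Real.exp_mul, mul_comm]

/-- On points where all relevant coordinates are positive, `Rfun` is the exponential of a
linear functional of the coordinatewise logarithms. -/
private lemma Rfun_eq_exp_sum {n : ℕ} (α : Fin n → ℝ) (c : Fin n → NNReal)
    (h : ∀ j, α j ≠ 0 → c j ≠ 0) :
    Rfun α c = Real.exp (∑ j, α j * Real.log ((c j : ℝ))) := by
  classical
  have h1 : ∑ j ∈ Finset.univ.filter (fun j => α j ≠ 0), α j * Real.log ((c j : ℝ))
      = ∑ j, α j * Real.log ((c j : ℝ)) := by
    refine Finset.sum_filter_of_ne ?_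
    intro x _ hx h0
    exact hx (by rw [h0, zero_mul])
  rw [Rfun, if_pos h, ← h1, Real.exp_sum]
  refine Finset.prod_congr rfl fun j hj => ?_
  rw [Finset.mem_filter] at hj
  have hc : (0:ℝ) < (c j : ℝ) := by
    have := h j hj.2
    exact_mod_cast this.bot_lt
  rw [Real.rpow_def_of_pos hc, mul_comm]

/-- Fix `z ∈ {0,1}ⁿ` and let `Θ_z = {c ∈ Θ : Z(c) = z}`.  Every trace on
`Θ_z` of a `G`-invariant Borel subset of `Θ = ℝ_{≥0}ⁿ` is the trace on `Θ_z` of a set of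
the σ-algebra generated by the functions `R_α`, `α ∈ ker A`. -/
theorem trace_of_invariant_subset_trace_of_oddsRatioAlgebra {d n : ℕ}
    (A : Matrix (Fin d) (Fin n) ℤ) (z : Fin n → ℝ) (hz : ∀ j, z j = 0 ∨ z j = 1)
    (B : Set (Fin n → NNReal)) (hB : MeasurableSet B) (hBinv : GorbitTheta A B = B) :
    ∃ C : Set (Fin n → NNReal),
      MeasurableSet[⨆ α ∈ kerA A,
        MeasurableSpace.comap (Rfun α) (inferInstance : MeasurableSpace ℝ)] C ∧
      B ∩ {c | Zfun c = z} = C ∩ {c | Zfun c = z} := by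
  classical
  set 𝔪 : MeasurableSpace (Fin n → NNReal) :=
    ⨆ α ∈ kerA A, MeasurableSpace.comap (Rfun α) (inferInstance : MeasurableSpace ℝ) with h𝔪
  set M : Matrix (Fin d) (Fin n) ℝ := A.map (Int.cast : ℤ → ℝ) with hM
  -- the subspace `K` of kernel elements supported on `S = {j : z j = 1}`
  let K : Submodule ℝ (EuclideanSpace ℝ (Fin n)) :=
    { carrier := {α | (fun k => α k) ∈ kerA A ∧ ∀ j, z j ≠ 1 → α j = 0}
      add_mem' := by
        rintro a b ⟨ha1, ha2⟩ ⟨hb1, hb2⟩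
        refine ⟨?_, fun j hj => ?_⟩
        · show (A.map (Int.cast : ℤ → ℝ)).mulVec (fun k => (a + b) k) = 0
          have h : (fun k => (a + b) k) = (fun k => a k) + (fun k => b k) := rfl
          have ha' : (A.map (Int.cast : ℤ → ℝ)).mulVec (fun k => a k) = 0 := ha1
          have hb' : (A.map (Int.cast : ℤ → ℝ)).mulVec (fun k => b k) = 0 := hb1
          rw [h, Matrix.mulVec_add, ha', hb', add_zero]
        · show a j + b j = 0
          rw [ha2 j hj, hb2 j hj, add_zero]
      zero_mem' := by
        refine ⟨?_, fun j _ => rfl⟩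
        show (A.map (Int.cast : ℤ → ℝ)).mulVec (fun k => (0 : EuclideanSpace ℝ (Fin n)) k) = 0
        have : (fun k => (0 : EuclideanSpace ℝ (Fin n)) k) = (0 : Fin n → ℝ) := rfl
        rw [this, Matrix.mulVec_zero]
      smul_mem' := by
        rintro s a ⟨ha1, ha2⟩
        refine ⟨?_, fun j hj => ?_⟩
        · have h : (fun k => (s • a) k) = s • (fun k => a k) := rfl
          show (A.map (Int.cast : ℤ → ℝ)).mulVec (fun k => (s • a) k) = 0
          have ha' : (A.map (Int.cast : ℤ → ℝ)).mulVec (fun k => a k) = 0 := ha1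
          rw [h, Matrix.mulVec_smul, ha', smul_zero]
        · show s * a j = 0
          rw [ha2 j hj, mul_zero] }
  let P := Submodule.orthogonalProjectionOnto K
  -- the vectors `α⁽ʲ⁾ = P eⱼ ∈ K ⊆ ker A`
  let αf : Fin n → (Fin n → ℝ) :=
    fun j k => (↑(P (EuclideanSpace.single j (1:ℝ))) : EuclideanSpace ℝ (Fin n)) k
  have hαfK : ∀ j, (↑(P (EuclideanSpace.single j (1:ℝ))) : EuclideanSpace ℝ (Fin n)) ∈ K :=
    fun j => (P (EuclideanSpace.single j (1:ℝ))).2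
  have hαfker : ∀ j, αf j ∈ kerA A := fun j => (hαfK j).1
  have hαfsupp : ∀ j k, z k ≠ 1 → αf j k = 0 := fun j k hk => (hαfK j).2 k hk
  -- the cross-section map
  let πm : (Fin n → NNReal) → (Fin n → NNReal) :=
    fun c j => if z j = 1 then Real.toNNReal (Rfun (αf j) c) else 0
  -- measurability of the cross-section map w.r.t. the odds-ratio σ-algebra
  have hπ : @Measurable _ _ 𝔪 MeasurableSpace.pi πm := by
    refine (@measurable_pi_iff _ _ _ 𝔪 _ _).mpr fun j => ?_
    by_cases hj : z j = 1
    · simp only [πm, hj, if_true]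
      have hR : @Measurable _ _ 𝔪 _ (Rfun (αf j)) := by
        rw [measurable_iff_comap_le, h𝔪]
        exact le_iSup₂ (f := fun α (_ : α ∈ kerA A) =>
          MeasurableSpace.comap (Rfun α) (inferInstance : MeasurableSpace ℝ)) (αf j) (hαfker j)
      exact measurable_real_toNNReal.comp hR
    · simp only [πm, hj, if_false]
      exact measurable_const
  -- the key orbit property: on `Θ_z`, `πm c` lies in the orbit of `c`
  have key : ∀ c : Fin n → NNReal, Zfun c = z → (c ∈ B ↔ πm c ∈ B) := by
    intro c hc
    have hz1 : ∀ k, z k = 1 → c k ≠ 0 := by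
      intro k hk h0
      have := congrFun hc k
      rw [Zfun] at this
      simp only [h0, lt_self_iff_false, if_false] at this
      rw [hk] at this; norm_num at this
    have hz0 : ∀ k, z k ≠ 1 → c k = 0 := by
      intro k hk
      by_contra h0
      have := congrFun hc k
      rw [Zfun] at this
      simp only [pos_iff_ne_zero.mpr h0, if_true] at this
      exact hk this.symm
    -- the vector of logarithms
    set x : EuclideanSpace ℝ (Fin n) := WithLp.toLp 2 (fun k => Real.log ((c k : ℝ))) with hxdef
    have hx0 : ∀ k, z k ≠ 1 → x k = 0 := by
      intro k hk
      show Real.log ((c k : ℝ)) = 0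
      rw [hz0 k hk]; simp
    -- `Rfun (αf j) c = exp ((P x) j)`
    have hRα : ∀ j, Rfun (αf j) c = Real.exp ((↑(P x) : EuclideanSpace ℝ (Fin n)) j) := by
      intro j
      have h1 : ∀ k, αf j k ≠ 0 → c k ≠ 0 := by
        intro k hk
        by_cases hzk : z k = 1
        · exact hz1 k hzk
        · exact absurd (hαfsupp j k hzk) hk
      rw [Rfun_eq_exp_sum _ _ h1]
      congr 1
      have h2 : ∑ k, αf j k * Real.log ((c k : ℝ))
          = (inner ℝ (↑(P (EuclideanSpace.single j (1:ℝ))) : EuclideanSpace ℝ (Fin n)) x : ℝ) := by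
        rw [PiLp.inner_apply]
        simp [αf, hxdef, mul_comm]
      rw [h2, show (inner ℝ (↑(P (EuclideanSpace.single j (1:ℝ))) : EuclideanSpace ℝ (Fin n)) x : ℝ)
          = inner ℝ (EuclideanSpace.single j (1:ℝ)) (↑(P x) : EuclideanSpace ℝ (Fin n)) from
          Submodule.inner_starProjection_left_eq_right K _ _]
      simp [EuclideanSpace.inner_single_left]
    -- `v = P x - x` is orthogonal to `K` and supported on `S`
    set v : EuclideanSpace ℝ (Fin n) := (↑(P x) : EuclideanSpace ℝ (Fin n)) - x with hvdef
    have hvorth : v ∈ Kᗮ := by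
      have := Submodule.sub_starProjection_mem_orthogonal (K := K) x
      have hneg : v = -(x - ↑(P x)) := by rw [hvdef, neg_sub]
      rw [hneg]
      exact neg_mem this
    have hvsupp : ∀ k, z k ≠ 1 → v k = 0 := by
      intro k hk
      have h1 : (↑(P x) : EuclideanSpace ℝ (Fin n)) k = 0 := (P x).2.2 k hk
      show (↑(P x) : EuclideanSpace ℝ (Fin n)) k - x k = 0
      rw [h1, hx0 k hk, sub_zero]
    -- the linear map `L : ℝᵈ → ℝⁿ` with image the (truncated) row space
    let L : (Fin d → ℝ) →ₗ[ℝ] EuclideanSpace ℝ (Fin n) :=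
      { toFun := fun t => (WithLp.toLp 2 (fun j => if z j = 1 then ∑ i, (A i j : ℝ) * t i else 0) :
          EuclideanSpace ℝ (Fin n))
        map_add' := by
          intro s t
          ext j
          show (if z j = 1 then ∑ i, (A i j : ℝ) * (s i + t i) else 0)
            = (if z j = 1 then ∑ i, (A i j : ℝ) * s i else 0)
              + (if z j = 1 then ∑ i, (A i j : ℝ) * t i else 0)
          by_cases hj : z j = 1 <;> simp [hj, mul_add, Finset.sum_add_distrib]
        map_smul' := by
          intro r t
          ext j
          show (if z j = 1 then ∑ i, (A i j : ℝ) * (r * t i) else 0)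
            = r * (if z j = 1 then ∑ i, (A i j : ℝ) * t i else 0)
          by_cases hj : z j = 1 <;> simp [hj, Finset.mul_sum]
          ring_nf
          exact Finset.sum_congr rfl fun i _ => by ring }
    -- `v` lies in the range of `L`
    have hvrange : v ∈ LinearMap.range L := by
      rw [← Submodule.orthogonal_orthogonal (LinearMap.range L)]
      rw [Submodule.mem_orthogonal]
      intro w hw
      -- the truncation of `w` to `S` lies in `K`
      set wS : EuclideanSpace ℝ (Fin n) := WithLp.toLp 2 (fun k => if z k = 1 then w k else 0) with hwSdef
      have hwSK : wS ∈ K := by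
        constructor
        · show (A.map (Int.cast : ℤ → ℝ)).mulVec (fun k => wS k) = 0
          funext i
          have h0 : (inner ℝ (L (Pi.single i (1:ℝ))) w : ℝ) = 0 := by
            rw [Submodule.mem_orthogonal] at hw
            exact hw (L (Pi.single i (1:ℝ))) (LinearMap.mem_range_self L _)
          rw [PiLp.inner_apply] at h0
          have h1 : ∀ j, (L (Pi.single i (1:ℝ))) j = if z j = 1 then (A i j : ℝ) else 0 := by
            intro j
            have h4 : (L (Pi.single i (1:ℝ))) j
                = if z j = 1 then ∑ i' : Fin d, (A i' j : ℝ) * (Pi.single i (1:ℝ) : Fin d → ℝ) i' else 0 := rfl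
            rw [h4]
            by_cases hj : z j = 1 <;> simp [hj, Pi.single_apply, mul_ite]
          show ∑ k, (A.map (Int.cast : ℤ → ℝ)) i k * wS k = 0
          rw [← h0]
          refine Finset.sum_congr rfl fun k _ => ?_
          rw [h1 k]
          show (A.map (Int.cast : ℤ → ℝ)) i k * (if z k = 1 then w k else 0)
            = w k * starRingEnd ℝ (if z k = 1 then (A i k : ℝ) else 0)
          by_cases hk : z k = 1 <;> simp [hk, Matrix.map_apply, mul_comm]
        · intro k hk
          show (if z k = 1 then w k else 0) = 0
          simp [hk]
      calc (inner ℝ w v : ℝ) = inner ℝ wS v := by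
            rw [PiLp.inner_apply, PiLp.inner_apply]
            refine Finset.sum_congr rfl fun k _ => ?_
            by_cases hk : z k = 1
            · show v k * starRingEnd ℝ (w k) = v k * starRingEnd ℝ (if z k = 1 then w k else 0)
              simp [hk]
            · show v k * starRingEnd ℝ (w k) = v k * starRingEnd ℝ (if z k = 1 then w k else 0)
              simp [hk, hvsupp k hk]
        _ = 0 := hvorth wS hwSK
    obtain ⟨t, ht⟩ := hvrange
    -- the group element `g`
    set g : Fin d → NNReal := fun i => Real.toNNReal (Real.exp (t i)) with hgdef
    have hg : ∀ i, 0 < g i := by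
      intro i
      simp [hgdef, Real.toNNReal_pos, Real.exp_pos]
    have hgcoe : ∀ i, ((g i : NNReal) : ℝ) = Real.exp (t i) := by
      intro i
      simp [hgdef, Real.coe_toNNReal _ (Real.exp_pos _).le]
    -- `πm c = g • c`
    have hπc : πm c = actA A g c := by
      funext j
      by_cases hj : z j = 1
      · have hcj : c j ≠ 0 := hz1 j hj
        have hcjpos : (0:ℝ) < (c j : ℝ) := by exact_mod_cast hcj.bot_lt
        apply NNReal.coe_injective
        have hLt : (∑ i, (A i j : ℝ) * t i)
            = (↑(P x) : EuclideanSpace ℝ (Fin n)) j - x j := by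
          have h3 := congrFun (congrArg WithLp.ofLp ht) j
          have h4 : L t j = if z j = 1 then ∑ i, (A i j : ℝ) * t i else 0 := rfl
          rw [h4, if_pos hj] at h3
          have hvj : v j = (↑(P x) : EuclideanSpace ℝ (Fin n)) j - x j := rfl
          rw [hvj] at h3
          exact h3
        have hlhs : ((πm c j : NNReal) : ℝ)
            = Real.exp ((↑(P x) : EuclideanSpace ℝ (Fin n)) j) := by
          show ((if z j = 1 then Real.toNNReal (Rfun (αf j) c) else 0 : NNReal) : ℝ) = _
          rw [if_pos hj, Real.coe_toNNReal _ (by rw [hRα j]; exact (Real.exp_pos _).le), hRα j]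
        have hrhs : ((actA A g c j : NNReal) : ℝ)
            = (c j : ℝ) * Real.exp (∑ i, (A i j : ℝ) * t i) := by
          show (((c j * ∏ i, g i ^ (A i j)) : NNReal) : ℝ) = _
          push_cast
          rw [Real.exp_sum]
          congr 1
          exact Finset.prod_congr rfl fun i _ => by rw [hgcoe i, exp_zpow_aux]
        rw [hlhs, hrhs, hLt]
        have hcx : (c j : ℝ) = Real.exp (x j) := by
          show (c j : ℝ) = Real.exp (Real.log ((c j : ℝ)))
          rw [Real.exp_log hcjpos]
        rw [hcx, ← Real.exp_add]
        ring_nf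
      · have hcj : c j = 0 := hz0 j hj
        show (if z j = 1 then Real.toNNReal (Rfun (αf j) c) else 0) = c j * ∏ i, g i ^ (A i j)
        rw [if_neg hj, hcj, zero_mul]
    -- conclude the orbit equivalence
    constructor
    · intro hcB
      rw [← hBinv]
      exact ⟨g, hg, c, hcB, hπc⟩
    · intro hπB
      rw [← hBinv]
      refine ⟨fun i => (g i)⁻¹, fun i => by
        have := hg i
        positivity, πm c, hπB, ?_⟩
      rw [hπc]
      funext j
      show c j = (c j * ∏ i, g i ^ (A i j)) * ∏ i, (g i)⁻¹ ^ (A i j)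
      have hprodne : (∏ i, g i ^ (A i j)) ≠ 0 :=
        Finset.prod_ne_zero_iff.mpr fun i _ => zpow_ne_zero _ (pos_iff_ne_zero.mp (hg i))
      rw [mul_assoc]
      have : (∏ i, (g i)⁻¹ ^ (A i j)) = (∏ i, g i ^ (A i j))⁻¹ := by
        rw [← Finset.prod_inv_distrib]
        exact Finset.prod_congr rfl fun i _ => by rw [inv_zpow]
      rw [this, mul_inv_cancel₀ hprodne, mul_one]
  -- assemble the answer
  refine ⟨πm ⁻¹' B, hπ hB, ?_⟩
  ext c
  simp only [Set.mem_inter_iff, Set.mem_setOf_eq, Set.mem_preimage]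
  constructor
  · rintro ⟨hcB, hcz⟩
    exact ⟨(key c hcz).1 hcB, hcz⟩
  · rintro ⟨hcB, hcz⟩
    exact ⟨(key c hcz).2 hcB, hcz⟩
end
end

section
/- Let A be a d × n integer matrix, Θ := ℝ_{≥0}ⁿ with its Borel σ-algebra, and let G := (ℝ_{>0})ᵈ act on Θ by (g·c)_j := c_j ∏_{i=1}^d g_i^{a_{ij}}. Then the σ-algebra of G-invariant Borel sets equals the σ-algebra generated by the generalized odds ratios and the zero pattern: O** := {B ∈ B(Θ) : G·B = B} = σ(R_α, Z : α ∈ ker A). -/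
open MeasureTheory

noncomputable section

open RealInnerProductSpace

variable {d n : ℕ} {A : Matrix (Fin d) (Fin n) ℤ}

/-! ### Basic facts about the action -/

lemma factor_pos {g : Fin d → NNReal} (hg : ∀ i, 0 < g i) (j : Fin n) :
    0 < ∏ i, g i ^ (A i j) :=
  Finset.prod_pos fun i _ => zpow_pos (hg i) _

lemma Zfun_actA {g : Fin d → NNReal} (hg : ∀ i, 0 < g i) (c : Fin n → NNReal) :
    Zfun (actA A g c) = Zfun c := by
  funext j
  have := factor_pos (A := A) hg j
  simp only [Zfun, actA]
  congr 1
  simp [pos_iff_ne_zero, mul_ne_zero_iff, this.ne']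

lemma actA_one (c : Fin n → NNReal) : actA A (fun _ => 1) c = c := by
  funext j; simp [actA]

lemma actA_actA {g g' : Fin d → NNReal} (c : Fin n → NNReal) :
    actA A g (actA A g' c) = actA A (fun i => g i * g' i) c := by
  funext j
  simp [actA, mul_zpow, Finset.prod_mul_distrib]
  ring

lemma actA_inv {g : Fin d → NNReal} (hg : ∀ i, 0 < g i) (c : Fin n → NNReal) :
    actA A (fun i => (g i)⁻¹) (actA A g c) = c := by
  rw [actA_actA]
  funext j
  simp only [actA]
  have : ∀ i, (g i)⁻¹ * g i = 1 := fun i => inv_mul_cancel₀ (hg i).ne'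
  simp [this]

lemma Rfun_actA {α : Fin n → ℝ} (hα : α ∈ kerA A) {g : Fin d → NNReal}
    (hg : ∀ i, 0 < g i) (c : Fin n → NNReal) :
    Rfun α (actA A g c) = Rfun α c := by
  classical
  have hp : ∀ j, (0:NNReal) < ∏ i, g i ^ (A i j) := factor_pos hg
  have hcond : (∀ j, α j ≠ 0 → actA A g c j ≠ 0) ↔ (∀ j, α j ≠ 0 → c j ≠ 0) := by
    simp [actA, mul_ne_zero_iff, (fun j => (hp j).ne')]
  unfold Rfun
  rw [if_congr hcond rfl rfl]
  split_ifs with h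
  · have key : ∀ j ∈ Finset.univ.filter (fun j => α j ≠ 0),
        ((actA A g c j : NNReal) : ℝ) ^ (α j)
          = (c j : ℝ) ^ (α j) * ∏ i, ((g i : ℝ)) ^ ((A i j : ℝ) * α j) := by
      intro j hj
      simp only [actA, NNReal.coe_mul]
      rw [Real.mul_rpow (c j).coe_nonneg (by positivity)]
      congr 1
      push_cast
      rw [← Real.finset_prod_rpow _ _ (fun i _ => by positivity)]
      refine Finset.prod_congr rfl fun i _ => ?_
      rw [← Real.rpow_intCast (g i : ℝ) (A i j), ← Real.rpow_mul (g i).coe_nonneg]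
    rw [Finset.prod_congr rfl key, Finset.prod_mul_distrib]
    have h2 : ∏ j ∈ Finset.univ.filter (fun j => α j ≠ 0),
        ∏ i, ((g i : ℝ)) ^ ((A i j : ℝ) * α j) = 1 := by
      rw [Finset.prod_comm]
      refine Finset.prod_eq_one fun i _ => ?_
      rw [← Real.rpow_sum_of_pos (by exact_mod_cast hg i)]
      have hsum : ∑ j ∈ Finset.univ.filter (fun j => α j ≠ 0), (A i j : ℝ) * α j
          = ∑ j, (A i j : ℝ) * α j := by
        refine Finset.sum_subset (Finset.filter_subset _ _) fun j _ hj => ?_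
        simp only [Finset.mem_filter, Finset.mem_univ, true_and, not_not] at hj
        simp [hj]
      rw [hsum]
      have := congrFun hα i
      simp only [Matrix.mulVec, dotProduct, Matrix.map_apply, Pi.zero_apply] at this
      rw [this, Real.rpow_zero]
    rw [h2, mul_one]
  · rfl

/-! ### Measurability of the generators -/

lemma measurableSet_cond (α : Fin n → ℝ) :
    MeasurableSet {c : Fin n → NNReal | ∀ j, α j ≠ 0 → c j ≠ 0} := by
  have : {c : Fin n → NNReal | ∀ j, α j ≠ 0 → c j ≠ 0}
      = ⋂ j, {c : Fin n → NNReal | α j ≠ 0 → c j ≠ 0} := by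
    ext c; simp [Set.mem_iInter]
  rw [this]
  refine MeasurableSet.iInter fun j => ?_
  by_cases h : α j = 0
  · simp [h]
  · have : {c : Fin n → NNReal | α j ≠ 0 → c j ≠ 0} = {c | c j ≠ 0} := by
      ext c; simp [h]
    rw [this]
    exact (measurable_pi_apply j (measurableSet_singleton 0)).compl

lemma measurable_Rfun (α : Fin n → ℝ) : Measurable (Rfun α) := by
  classical
  unfold Rfun
  refine Measurable.ite (measurableSet_cond α) ?_ measurable_const
  refine Finset.measurable_prod _ fun j _ => ?_
  exact (measurable_coe_nnreal_real.comp (measurable_pi_apply j)).pow measurable_const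

lemma measurable_Zfun : Measurable (Zfun (n := n)) := by
  rw [measurable_pi_iff]
  intro j
  unfold Zfun
  refine Measurable.ite ?_ measurable_const measurable_const
  exact measurableSet_lt measurable_const (measurable_pi_apply j)

/-! ### The σ-algebra generated by the odds ratios and the zero pattern -/

def oddsAlg (A : Matrix (Fin d) (Fin n) ℤ) : MeasurableSpace (Fin n → NNReal) :=
  (⨆ α ∈ kerA A,
      MeasurableSpace.comap (Rfun α) (inferInstance : MeasurableSpace ℝ)) ⊔
    MeasurableSpace.comap Zfun (inferInstance : MeasurableSpace (Fin n → ℝ))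

lemma oddsAlg_le_borel : oddsAlg A ≤ (inferInstance : MeasurableSpace (Fin n → NNReal)) := by
  refine sup_le (iSup₂_le fun α _ => ?_) ?_
  · exact (measurable_Rfun α).comap_le
  · exact measurable_Zfun.comap_le

def invAlg (A : Matrix (Fin d) (Fin n) ℤ) : MeasurableSpace (Fin n → NNReal) where
  MeasurableSet' B := ∀ g : Fin d → NNReal, (∀ i, 0 < g i) → actA A g ⁻¹' B = B
  measurableSet_empty := by simp
  measurableSet_compl := fun s hs g hg => by
    rw [Set.preimage_compl, hs g hg]
  measurableSet_iUnion := fun f hf g hg => by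
    rw [Set.preimage_iUnion]
    exact Set.iUnion_congr fun i => hf i g hg

lemma oddsAlg_le_invAlg : oddsAlg A ≤ invAlg A := by
  refine sup_le (iSup₂_le fun α hα => ?_) ?_
  · rintro _ ⟨s, _, rfl⟩ g hg
    ext c
    simp [Set.mem_preimage, Rfun_actA hα hg]
  · rintro _ ⟨s, _, rfl⟩ g hg
    ext c
    simp [Set.mem_preimage, Zfun_actA hg]

lemma gorbit_eq_of_inv {B : Set (Fin n → NNReal)}
    (hB : ∀ g : Fin d → NNReal, (∀ i, 0 < g i) → actA A g ⁻¹' B = B) :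
    GorbitTheta A B = B := by
  ext x
  constructor
  · rintro ⟨g, hg, c, hc, rfl⟩
    have hginv : ∀ i, 0 < (g i)⁻¹ := fun i => by
      rw [inv_pos]; exact hg i
    rw [← hB _ hginv]
    simpa [Set.mem_preimage, actA_inv hg c] using hc
  · intro hx
    exact ⟨fun _ => 1, fun _ => one_pos, x, hx, (actA_one x).symm⟩

/-! ### Linear algebra: kernel vectors supported in `S` vs. the row space restricted to `S` -/

/-- `α ∈ ker A` with support in `S`, as a submodule of Euclidean space. -/
def Vsub (A : Matrix (Fin d) (Fin n) ℤ) (S : Finset (Fin n)) :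
    Submodule ℝ (EuclideanSpace ℝ (Fin n)) where
  carrier := {α | (A.map (Int.cast : ℤ → ℝ)).mulVec α = 0 ∧ ∀ j ∉ S, α j = 0}
  add_mem' := by
    rintro a b ⟨ha1, ha2⟩ ⟨hb1, hb2⟩
    refine ⟨?_, fun j hj => by simp [PiLp.add_apply, ha2 j hj, hb2 j hj]⟩
    show (A.map _).mulVec (a + b) = 0
    rw [WithLp.ofLp_add, Matrix.mulVec_add, ha1, hb1, add_zero]
  zero_mem' := by
    refine ⟨?_, fun j _ => rfl⟩
    show (A.map _).mulVec 0 = 0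
    simp [Matrix.mulVec_zero]
  smul_mem' := by
    rintro r a ⟨ha1, ha2⟩
    refine ⟨?_, fun j hj => by simp [PiLp.smul_apply, ha2 j hj]⟩
    show (A.map _).mulVec (r • a) = 0
    rw [WithLp.ofLp_smul, Matrix.mulVec_smul, ha1, smul_zero]

/-- Rows of `A` restricted to `S`, extended by zero: the linear map `h ↦ 1_S · (Aᵀ h)`. -/
def rowMap (A : Matrix (Fin d) (Fin n) ℤ) (S : Finset (Fin n)) :
    (Fin d → ℝ) →ₗ[ℝ] EuclideanSpace ℝ (Fin n) where
  toFun h := WithLp.toLp 2 (fun j => if j ∈ S then ∑ i, h i * (A i j : ℝ) else 0)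
  map_add' a b := by
    ext j
    rw [PiLp.add_apply]
    by_cases hj : j ∈ S <;> simp [hj, add_mul, Finset.sum_add_distrib]
  map_smul' r a := by
    ext j
    rw [PiLp.smul_apply]
    by_cases hj : j ∈ S <;> simp [hj, Finset.mul_sum, mul_assoc]

/-- Vectors supported off `S`. -/
def Csub (S : Finset (Fin n)) : Submodule ℝ (EuclideanSpace ℝ (Fin n)) where
  carrier := {x | ∀ j ∈ S, x j = 0}
  add_mem' := fun ha hb j hj => by simp [PiLp.add_apply, ha j hj, hb j hj]
  zero_mem' := fun j _ => rfl
  smul_mem' := fun r a ha j hj => by simp [PiLp.smul_apply, ha j hj]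

lemma euclid_sum_apply {m : Type*} (s : Finset m) (f : m → EuclideanSpace ℝ (Fin n)) (j : Fin n) :
    (∑ k ∈ s, f k) j = ∑ k ∈ s, f k j := by
  induction s using Finset.cons_induction with
  | empty => rfl
  | cons a s ha ih => rw [Finset.sum_cons, Finset.sum_cons, PiLp.add_apply, ih]

lemma inner_eq_sum (x y : EuclideanSpace ℝ (Fin n)) : ⟪x, y⟫ = ∑ j, x j * y j := by
  rw [PiLp.inner_apply]; simp [RCLike.inner_apply]
  exact Finset.sum_congr rfl fun _ _ => mul_comm _ _

lemma orth_W_eq_V (A : Matrix (Fin d) (Fin n) ℤ) (S : Finset (Fin n)) :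
    ((LinearMap.range (rowMap A S)) ⊔ Csub S)ᗮ = Vsub A S := by
  ext x
  simp only [Submodule.mem_orthogonal]
  constructor
  · intro hx
    have hoff : ∀ j ∉ S, x j = 0 := by
      intro j hj
      have hmem : (EuclideanSpace.single j (1:ℝ)) ∈
          (LinearMap.range (rowMap A S)) ⊔ Csub S := by
        refine Submodule.mem_sup_right ?_
        intro k hk
        have : k ≠ j := fun h => hj (h ▸ hk)
        simp [EuclideanSpace.single_apply, this]
      have := hx _ hmem
      rw [EuclideanSpace.inner_single_left] at this
      simpa using this
    refine ⟨?_, hoff⟩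
    funext i
    have hmem : rowMap A S (Pi.single i 1) ∈ (LinearMap.range (rowMap A S)) ⊔ Csub S :=
      Submodule.mem_sup_left (LinearMap.mem_range_self _ _)
    have h0 := hx _ hmem
    rw [inner_eq_sum] at h0
    have hterm : ∀ j, (rowMap A S (Pi.single i 1)) j * x j = (A i j : ℝ) * x j := by
      intro j
      by_cases hj : j ∈ S
      · simp [rowMap, hj, Pi.single_apply]
      · simp [rowMap, hj, hoff j hj]
    rw [Finset.sum_congr rfl (fun j _ => hterm j)] at h0
    simpa [Matrix.mulVec, dotProduct, Matrix.map_apply] using h0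
  · rintro ⟨hker, hoff⟩ u hu
    rcases Submodule.mem_sup.mp hu with ⟨a, ha, b, hb, rfl⟩
    rcases ha with ⟨h, rfl⟩
    rw [inner_add_left, inner_eq_sum, inner_eq_sum]
    have h1 : ∑ j, (rowMap A S h) j * x j = 0 := by
      have hterm : ∀ j, (rowMap A S h) j * x j = ∑ i, h i * ((A i j : ℝ) * x j) := by
        intro j
        by_cases hj : j ∈ S
        · simp [rowMap, hj, Finset.sum_mul, mul_assoc]
        · simp [rowMap, hj, hoff j hj]
      rw [Finset.sum_congr rfl (fun j _ => hterm j), Finset.sum_comm]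
      refine Finset.sum_eq_zero fun i _ => ?_
      rw [← Finset.mul_sum]
      have := congrFun hker i
      simp only [Matrix.mulVec, dotProduct, Matrix.map_apply, Pi.zero_apply] at this
      simp [this]
    have h2 : ∑ j, b j * x j = 0 := by
      refine Finset.sum_eq_zero fun j _ => ?_
      by_cases hj : j ∈ S
      · simp [hb j hj]
      · simp [hoff j hj]
    rw [h1, h2, add_zero]

lemma proj_decomp (A : Matrix (Fin d) (Fin n) ℤ) (S : Finset (Fin n))
    (x : EuclideanSpace ℝ (Fin n)) :
    ∃ h : Fin d → ℝ, ∀ j ∈ S,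
      x j - ((Vsub A S).orthogonalProjectionOnto x : EuclideanSpace ℝ (Fin n)) j
        = ∑ i, h i * (A i j : ℝ) := by
  have hmem : x - ((Vsub A S).orthogonalProjectionOnto x : EuclideanSpace ℝ (Fin n)) ∈ (Vsub A S)ᗮ :=
    by exact (Vsub A S).sub_starProjection_mem_orthogonal x
  have hW : (Vsub A S)ᗮ = (LinearMap.range (rowMap A S)) ⊔ Csub S := by
    rw [← orth_W_eq_V A S, Submodule.orthogonal_orthogonal]
  rw [hW] at hmem
  rcases Submodule.mem_sup.mp hmem with ⟨a, ⟨h, rfl⟩, b, hb, hab⟩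
  refine ⟨h, fun j hj => ?_⟩
  have := congr_arg (fun v : EuclideanSpace ℝ (Fin n) => v j) hab
  simp only [PiLp.add_apply, PiLp.sub_apply] at this
  have hbj : b j = 0 := hb j hj
  have hrj : (rowMap A S) h j = ∑ i, h i * (A i j : ℝ) := by simp [rowMap, hj]
  rw [← this, hrj, hbj, add_zero]

/-! ### The canonical representative of an orbit -/

def logC (c : Fin n → NNReal) : EuclideanSpace ℝ (Fin n) := WithLp.toLp 2 (fun j => Real.log (c j))

lemma log_Rfun {S : Finset (Fin n)} (b : EuclideanSpace ℝ (Fin n))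
    (hbS : ∀ j ∉ S, b j = 0) {c : Fin n → NNReal} (hc : ∀ j ∈ S, c j ≠ 0) :
    Real.log (Rfun b c) = ∑ j, b j * Real.log (c j) := by
  classical
  have hcond : ∀ j, b j ≠ 0 → c j ≠ 0 := by
    intro j hbj
    have hjS : j ∈ S := by by_contra hj; exact hbj (hbS j hj)
    exact hc j hjS
  have hpos : ∀ j, b j ≠ 0 → (0:ℝ) < c j := by
    intro j hbj
    exact lt_of_le_of_ne (c j).coe_nonneg (by exact_mod_cast (hcond j hbj).symm)
  rw [Rfun, if_pos hcond, Real.log_prod]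
  · rw [Finset.sum_congr rfl (fun j hj => Real.log_rpow
      (hpos j (Finset.mem_filter.mp hj).2) (b j))]
    refine Finset.sum_subset (Finset.filter_subset _ _) fun j _ hj => ?_
    simp only [Finset.mem_filter, Finset.mem_univ, true_and, not_not] at hj
    simp [hj]
  · intro j hj
    have := hpos j (Finset.mem_filter.mp hj).2
    positivity

/-- The canonical representative of the orbit of `c`, for a given support pattern `S`. -/
def repS (A : Matrix (Fin d) (Fin n) ℤ) (S : Finset (Fin n)) (c : Fin n → NNReal) :
    Fin n → NNReal :=
  fun j => if j ∈ S then Real.toNNReal (Real.exp (∑ k,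
    Real.log (Rfun ((stdOrthonormalBasis ℝ (Vsub A S)) k : EuclideanSpace ℝ (Fin n)) c)
      * ((stdOrthonormalBasis ℝ (Vsub A S)) k : EuclideanSpace ℝ (Fin n)) j)) else 0

lemma repS_eq_act (A : Matrix (Fin d) (Fin n) ℤ) {S : Finset (Fin n)} {c : Fin n → NNReal}
    (hc : ∀ j, c j ≠ 0 ↔ j ∈ S) :
    ∃ g : Fin d → NNReal, (∀ i, 0 < g i) ∧ repS A S c = actA A g c := by
  classical
  set x := logC c with hx
  set b := stdOrthonormalBasis ℝ (Vsub A S) with hb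
  set y : EuclideanSpace ℝ (Fin n) :=
    ((Vsub A S).orthogonalProjectionOnto x : EuclideanSpace ℝ (Fin n)) with hy
  have hcS : ∀ j ∈ S, c j ≠ 0 := fun j hj => (hc j).mpr hj
  have hyj : ∀ j, y j = ∑ k, Real.log (Rfun (b k : EuclideanSpace ℝ (Fin n)) c)
      * (b k : EuclideanSpace ℝ (Fin n)) j := by
    intro j
    have hsum := b.orthogonalProjectionOnto_apply_eq_sum x
    have hcoe := congr_arg (fun v : Vsub A S => (v : EuclideanSpace ℝ (Fin n)) j) hsum
    simp only at hcoe
    rw [hy, hcoe]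
    push_cast
    rw [euclid_sum_apply]
    refine Finset.sum_congr rfl fun k _ => ?_
    rw [PiLp.smul_apply, smul_eq_mul]
    congr 1
    rw [inner_eq_sum, log_Rfun _ (b k).2.2 hcS]
    rfl
  obtain ⟨h, hh⟩ := proj_decomp A S x
  refine ⟨fun i => Real.toNNReal (Real.exp (-h i)),
    fun i => Real.toNNReal_pos.mpr (Real.exp_pos _), ?_⟩
  funext j
  by_cases hj : j ∈ S
  · apply NNReal.coe_injective
    have hcj : (0:ℝ) < c j := lt_of_le_of_ne (c j).coe_nonneg
      (by exact_mod_cast (hcS j hj).symm)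
    have hL : ((repS A S c j : NNReal) : ℝ) = Real.exp (y j) := by
      rw [repS, if_pos hj, Real.coe_toNNReal _ (Real.exp_pos _).le, hyj j]
    have hR : ((actA A (fun i => Real.toNNReal (Real.exp (-h i))) c j : NNReal) : ℝ)
        = Real.exp (x j) * Real.exp (-∑ i, h i * (A i j : ℝ)) := by
      have hfac : ∀ i : Fin d, (((Real.toNNReal (Real.exp (-h i))) : NNReal) : ℝ) ^ (A i j)
          = Real.exp (-h i * (A i j : ℝ)) := by
        intro i
        rw [Real.coe_toNNReal _ (Real.exp_pos _).le, ← Real.rpow_intCast, ← Real.exp_mul]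
      rw [actA]
      push_cast
      rw [Finset.prod_congr rfl (fun i _ => hfac i), ← Real.exp_sum]
      congr 1
      · exact (Real.exp_log hcj).symm
      · simp [neg_mul, Finset.sum_neg_distrib]
    rw [hL, hR, ← Real.exp_add]
    congr 1
    rw [hy]
    linarith [hh j hj]
  · rw [repS, if_neg hj]
    have : c j = 0 := not_not.mp (fun hne => hj ((hc j).mp hne))
    rw [actA, this, zero_mul]

/-! ### Measurability of the representative w.r.t. the generated σ-algebra -/

lemma measurable_oddsAlg_Rfun {α : Fin n → ℝ} (hα : α ∈ kerA A) :
    Measurable[oddsAlg A] (Rfun α) := by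
  refine measurable_iff_comap_le.mpr (le_trans ?_ le_sup_left)
  exact le_iSup₂ (f := fun (α : Fin n → ℝ) (_ : α ∈ kerA A) =>
    MeasurableSpace.comap (Rfun α) (inferInstance : MeasurableSpace ℝ)) α hα

lemma measurable_oddsAlg_Zfun : Measurable[oddsAlg A] (Zfun (n := n)) :=
  measurable_iff_comap_le.mpr le_sup_right

lemma measurable_repS (A : Matrix (Fin d) (Fin n) ℤ) (S : Finset (Fin n)) :
    Measurable[oddsAlg A] (repS A S) := by
  refine @measurable_pi_lambda _ _ _ (oddsAlg A) _ (repS A S) fun j => ?_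
  by_cases hj : j ∈ S
  · simp only [repS, if_pos hj]
    refine measurable_real_toNNReal.comp (Real.measurable_exp.comp ?_)
    refine Finset.measurable_sum _ fun k _ => ?_
    refine Measurable.mul_const ?_ _
    refine Real.measurable_log.comp ?_
    exact measurable_oddsAlg_Rfun ((stdOrthonormalBasis ℝ (Vsub A S)) k).2.1
  · simp only [repS, if_neg hj]
    exact measurable_const

def suppF (c : Fin n → NNReal) : Finset (Fin n) :=
  Finset.univ.filter (fun j => c j ≠ 0)

lemma mem_suppF {c : Fin n → NNReal} (j : Fin n) : j ∈ suppF c ↔ c j ≠ 0 := by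
  simp [suppF]

lemma measurable_suppF_eq (A : Matrix (Fin d) (Fin n) ℤ) (S : Finset (Fin n)) :
    MeasurableSet[oddsAlg A] {c : Fin n → NNReal | suppF c = S} := by
  have hsplit : {c : Fin n → NNReal | suppF c = S}
      = ⋂ j, {c : Fin n → NNReal | c j ≠ 0 ↔ j ∈ S} := by
    ext c
    simp only [Set.mem_setOf_eq, Set.mem_iInter, Finset.ext_iff, mem_suppF]
  have hZj : ∀ j : Fin n, MeasurableSet[oddsAlg A] {c : Fin n → NNReal | c j ≠ 0} := by
    intro j
    have hmeas : Measurable[oddsAlg A] (fun c : Fin n → NNReal => Zfun c j) :=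
      (measurable_pi_apply j).comp measurable_oddsAlg_Zfun
    have : {c : Fin n → NNReal | c j ≠ 0}
        = (fun c : Fin n → NNReal => Zfun c j) ⁻¹' {1} := by
      ext c
      simp only [Set.mem_setOf_eq, Set.mem_preimage, Set.mem_singleton_iff, Zfun]
      rw [← pos_iff_ne_zero]
      constructor
      · intro h; rw [if_pos h]
      · intro h; by_contra hlt; rw [if_neg hlt] at h; exact one_ne_zero h.symm
    rw [this]
    exact hmeas (measurableSet_singleton 1)
  rw [hsplit]
  refine MeasurableSet.iInter fun j => ?_
  by_cases hjS : j ∈ S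
  · have : {c : Fin n → NNReal | c j ≠ 0 ↔ j ∈ S} = {c : Fin n → NNReal | c j ≠ 0} := by
      ext c; simp [hjS]
    rw [this]; exact hZj j
  · have : {c : Fin n → NNReal | c j ≠ 0 ↔ j ∈ S} = {c : Fin n → NNReal | c j ≠ 0}ᶜ := by
      ext c; simp [hjS]
    rw [this]; exact (hZj j).compl

/-- The canonical representative of the orbit of `c`. -/
def repA (A : Matrix (Fin d) (Fin n) ℤ) (c : Fin n → NNReal) : Fin n → NNReal :=
  repS A (suppF c) c

lemma repA_spec (A : Matrix (Fin d) (Fin n) ℤ) (c : Fin n → NNReal) :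
    ∃ g : Fin d → NNReal, (∀ i, 0 < g i) ∧ repA A c = actA A g c :=
  repS_eq_act A (fun j => (mem_suppF j).symm)

lemma measurable_repA (A : Matrix (Fin d) (Fin n) ℤ) :
    Measurable[oddsAlg A] (repA A) := by
  intro E hE
  have hdecomp : repA A ⁻¹' E
      = ⋃ S : Finset (Fin n), ({c : Fin n → NNReal | suppF c = S} ∩ repS A S ⁻¹' E) := by
    ext c
    simp only [Set.mem_preimage, Set.mem_iUnion, Set.mem_inter_iff, Set.mem_setOf_eq]
    constructor
    · intro h
      exact ⟨suppF c, rfl, h⟩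
    · rintro ⟨S, hS, h⟩
      rw [repA, hS]
      exact h
  rw [hdecomp]
  exact MeasurableSet.iUnion fun S =>
    (measurable_suppF_eq A S).inter (measurable_repS A S hE)

/-! ### The main theorem -/

/-- The σ-algebra `O** = {B ∈ B(Θ) : G·B = B}` of `G`-invariant Borel
subsets of `Θ = ℝ_{≥0}ⁿ` equals the σ-algebra generated by the generalized odds ratios
`R_α` (`α ∈ ker A`) together with the zero-pattern map `Z`. -/
theorem invariantAlgebra_eq_oddsRatio_zeroPattern {d n : ℕ}
    (A : Matrix (Fin d) (Fin n) ℤ) (B : Set (Fin n → NNReal)) :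
    (MeasurableSet B ∧ GorbitTheta A B = B) ↔
      MeasurableSet[(⨆ α ∈ kerA A,
          MeasurableSpace.comap (Rfun α) (inferInstance : MeasurableSpace ℝ)) ⊔
        MeasurableSpace.comap Zfun (inferInstance : MeasurableSpace (Fin n → ℝ))] B := by
  constructor
  · rintro ⟨hBm, hBG⟩
    show MeasurableSet[oddsAlg A] B
    have key : B = repA A ⁻¹' B := by
      ext c
      obtain ⟨g, hg, hgc⟩ := repA_spec A c
      constructor
      · intro hcB
        show repA A c ∈ B
        rw [← hBG, hgc]
        exact ⟨g, hg, c, hcB, rfl⟩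
      · intro hcB
        rw [← hBG]
        refine ⟨fun i => (g i)⁻¹, fun i => inv_pos.mpr (hg i), repA A c, hcB, ?_⟩
        rw [hgc, actA_inv hg]
    rw [key]
    exact measurable_repA A hBm
  · intro hB
    have hB' : MeasurableSet[oddsAlg A] B := hB
    exact ⟨oddsAlg_le_borel _ hB', gorbit_eq_of_inv (oddsAlg_le_invAlg _ hB')⟩

end
end

section
/- Let A be a d × n integer matrix, Θ := ℝ_{≥0}ⁿ with its Borel σ-algebra, let (Ω, F) be a measurable space, and let X : Ω → ℤ_{≥0}ⁿ and θ : Ω → Θ be measurable maps with θ surjective. Then σ(AX, θ) = σ(Aθ, AX, R_α(θ), Z(θ) : α ∈ ker A); that is, the σ-algebra generated by AX and the full parameter θ equals the σ-algebra generated by the nuisance parameter Aθ together with the σ-algebra of interest generated by AX, the generalized odds ratios R_α(θ) (α ∈ ker A), and the zero pattern Z(θ). -/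
open MeasureTheory

noncomputable section

namespace SigmaAux

variable {d n : ℕ}

/-- The linear part `c ↦ A c` over the reals. -/
def fA (A : Matrix (Fin d) (Fin n) ℤ) (c : Fin n → NNReal) : Fin d → ℝ :=
  (A.map (Int.cast : ℤ → ℝ)).mulVec (fun j => ((c j : ℝ)))

lemma measurable_fA (A : Matrix (Fin d) (Fin n) ℤ) : Measurable (fA A) := by
  apply measurable_pi_lambda
  intro i
  simp only [fA, Matrix.mulVec, dotProduct]
  apply Finset.measurable_sum
  intro j _
  exact (measurable_const.mul (measurable_coe_nnreal_real.comp (measurable_pi_apply j)))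

lemma measurable_Rfun (α : Fin n → ℝ) : Measurable (Rfun α) := by
  classical
  unfold Rfun
  refine Measurable.ite ?_ ?_ measurable_const
  · have heq : {c : Fin n → NNReal | ∀ j, α j ≠ 0 → c j ≠ 0}
        = ⋂ j, {c : Fin n → NNReal | α j ≠ 0 → c j ≠ 0} := by
      ext c; simp [Set.mem_iInter]
    rw [heq]
    refine MeasurableSet.iInter (fun j => ?_)
    by_cases h : α j = 0
    · rw [show {c : Fin n → NNReal | α j ≠ 0 → c j ≠ 0} = Set.univ from by ext c; simp [h]]
      exact MeasurableSet.univ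
    · rw [show {c : Fin n → NNReal | α j ≠ 0 → c j ≠ 0}
          = (fun c : Fin n → NNReal => c j) ⁻¹' ({0}ᶜ) from by ext c; simp [h]]
      exact (measurable_pi_apply j) (measurableSet_singleton (0 : NNReal)).compl
  · apply Finset.measurable_prod
    intro j _
    have h1 : Measurable (fun x : ℝ => x ^ (α j)) := by measurability
    exact h1.comp (measurable_coe_nnreal_real.comp (measurable_pi_apply j))

lemma measurable_Zfun : Measurable (Zfun (n := n)) := by
  apply measurable_pi_lambda
  intro j
  refine Measurable.ite ?_ measurable_const measurable_const
  exact measurableSet_lt measurable_const (measurable_pi_apply j)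

/-- Vectors supported on `S`. -/
def suppSub (S : Finset (Fin n)) : Submodule ℝ (Fin n → ℝ) where
  carrier := {α | ∀ j ∉ S, α j = 0}
  add_mem' := fun ha hb j hj => by simp [ha j hj, hb j hj]
  zero_mem' := fun j _ => rfl
  smul_mem' := fun r a ha j hj => by simp [ha j hj]

def KS (A : Matrix (Fin d) (Fin n) ℤ) (S : Finset (Fin n)) : Submodule ℝ (Fin n → ℝ) :=
  (LinearMap.ker ((A.map (Int.cast : ℤ → ℝ)).mulVecLin)) ⊓ suppSub S

/-- A finite spanning set of `KS A S`. -/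
def TS (A : Matrix (Fin d) (Fin n) ℤ) (S : Finset (Fin n)) : Finset (Fin n → ℝ) :=
  (IsNoetherian.noetherian (KS A S)).choose

lemma TS_span (A : Matrix (Fin d) (Fin n) ℤ) (S : Finset (Fin n)) :
    Submodule.span ℝ (TS A S : Set (Fin n → ℝ)) = KS A S :=
  (IsNoetherian.noetherian (KS A S)).choose_spec

def Tset (A : Matrix (Fin d) (Fin n) ℤ) : Finset (Fin n → ℝ) :=
  Finset.univ.biUnion (fun S : Finset (Fin n) => TS A S)

lemma Tset_ker (A : Matrix (Fin d) (Fin n) ℤ) {α : Fin n → ℝ} (hα : α ∈ Tset A) :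
    α ∈ kerA A := by
  simp only [Tset, Finset.mem_biUnion] at hα
  obtain ⟨S, -, hS⟩ := hα
  have : α ∈ KS A S := by
    rw [← TS_span A S]; exact Submodule.subset_span hS
  have h := (Submodule.mem_inf.mp this).1
  rw [LinearMap.mem_ker, Matrix.mulVecLin_apply] at h
  exact h

/-- The combined map whose components generate the σ-algebra of interest. -/
def Phi (A : Matrix (Fin d) (Fin n) ℤ) (c : Fin n → NNReal) :
    (Fin d → ℝ) × (({x // x ∈ Tset A} → ℝ) × (Fin n → ℝ)) :=
  (fA A c, (fun t => Rfun (t : Fin n → ℝ) c, Zfun c))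

lemma measurable_Phi (A : Matrix (Fin d) (Fin n) ℤ) : Measurable (Phi A) := by
  refine (measurable_fA A).prodMk (Measurable.prodMk ?_ measurable_Zfun)
  exact measurable_pi_lambda _ (fun t => measurable_Rfun _)

lemma injective_Phi (A : Matrix (Fin d) (Fin n) ℤ) : Function.Injective (Phi A) := by
  classical
  intro c c' h
  have h1 : fA A c = fA A c' := congrArg Prod.fst h
  have h2 : ∀ t ∈ Tset A, Rfun t c = Rfun t c' := fun t ht =>
    congrArg (fun p => p.2.1 ⟨t, ht⟩) h
  have h3 : ∀ j, c j = 0 ↔ c' j = 0 := by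
    intro j
    have hz : (if 0 < c j then (1:ℝ) else 0) = (if 0 < c' j then 1 else 0) :=
      congrArg (fun p => p.2.2 j) h
    constructor <;> intro hj <;> by_contra hj'
    · rw [if_neg (by simp [hj]), if_pos (pos_iff_ne_zero.mpr hj')] at hz
      exact zero_ne_one hz
    · rw [if_pos (pos_iff_ne_zero.mpr hj'), if_neg (by simp [hj])] at hz
      exact one_ne_zero hz
  set S : Finset (Fin n) := Finset.univ.filter (fun j => c j ≠ 0) with hS
  have key : ∀ α ∈ KS A S, ∑ j, α j * (Real.log (c j) - Real.log (c' j)) = 0 := by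
    have base : ∀ α ∈ (TS A S : Set (Fin n → ℝ)),
        ∑ j, α j * (Real.log (c j) - Real.log (c' j)) = 0 := by
      intro α hα
      have hαK : α ∈ KS A S := by
        rw [← TS_span A S]; exact Submodule.subset_span hα
      have hsupp : ∀ j, α j ≠ 0 → c j ≠ 0 := by
        intro j hj
        by_contra hcj
        have hjS : j ∉ S := by simp [hS, hcj]
        exact hj ((Submodule.mem_inf.mp hαK).2 j hjS)
      have hsupp' : ∀ j, α j ≠ 0 → c' j ≠ 0 := fun j hj hc' =>
        hsupp j hj ((h3 j).mpr hc')
      have hT : α ∈ Tset A := Finset.mem_biUnion.mpr ⟨S, Finset.mem_univ S, hα⟩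
      have hR := h2 α hT
      have hc : Rfun α c
          = Real.exp (∑ j ∈ Finset.univ.filter (fun j => α j ≠ 0),
              Real.log (c j) * α j) := by
        rw [Rfun, if_pos hsupp, Real.exp_sum]
        refine Finset.prod_congr rfl fun j hj => ?_
        rw [Real.rpow_def_of_pos]
        exact_mod_cast pos_iff_ne_zero.mpr (hsupp j (Finset.mem_filter.mp hj).2)
      have hc' : Rfun α c'
          = Real.exp (∑ j ∈ Finset.univ.filter (fun j => α j ≠ 0),
              Real.log (c' j) * α j) := by
        rw [Rfun, if_pos hsupp', Real.exp_sum]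
        refine Finset.prod_congr rfl fun j hj => ?_
        rw [Real.rpow_def_of_pos]
        exact_mod_cast pos_iff_ne_zero.mpr (hsupp' j (Finset.mem_filter.mp hj).2)
      rw [hc, hc'] at hR
      have hsum := Real.exp_injective hR
      have e1 : ∑ j ∈ Finset.univ.filter (fun j => α j ≠ 0), Real.log (c j) * α j
          = ∑ j, Real.log (c j) * α j :=
        Finset.sum_filter_of_ne (fun j _ hne => fun h0 => hne (by rw [h0, mul_zero]))
      have e2 : ∑ j ∈ Finset.univ.filter (fun j => α j ≠ 0), Real.log (c' j) * α j
          = ∑ j, Real.log (c' j) * α j :=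
        Finset.sum_filter_of_ne (fun j _ hne => fun h0 => hne (by rw [h0, mul_zero]))
      rw [e1, e2] at hsum
      calc ∑ j, α j * (Real.log (c j) - Real.log (c' j))
          = ∑ j, Real.log (c j) * α j - ∑ j, Real.log (c' j) * α j := by
            rw [← Finset.sum_sub_distrib]
            exact Finset.sum_congr rfl fun j _ => by ring
        _ = 0 := by rw [hsum, sub_self]
    intro α hα
    rw [← TS_span A S] at hα
    induction hα using Submodule.span_induction with
    | mem x hx => exact base x hx
    | zero => simp
    | add x y hx hy ihx ihy =>
        rw [show ∑ j, (x + y) j * (Real.log (c j) - Real.log (c' j))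
            = (∑ j, x j * (Real.log (c j) - Real.log (c' j)))
              + ∑ j, y j * (Real.log (c j) - Real.log (c' j)) from by
          rw [← Finset.sum_add_distrib]
          exact Finset.sum_congr rfl fun j _ => by simp [add_mul]]
        rw [ihx, ihy, add_zero]
    | smul a x hx ihx =>
        rw [show ∑ j, (a • x) j * (Real.log (c j) - Real.log (c' j))
            = a * ∑ j, x j * (Real.log (c j) - Real.log (c' j)) from by
          rw [Finset.mul_sum]
          exact Finset.sum_congr rfl fun j _ => by simp [mul_assoc]]
        rw [ihx, mul_zero]
  set β : Fin n → ℝ := fun j => (c j : ℝ) - (c' j : ℝ) with hβdef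
  have hβ : β ∈ KS A S := by
    refine Submodule.mem_inf.mpr ⟨?_, ?_⟩
    · rw [LinearMap.mem_ker, Matrix.mulVecLin_apply]
      have : β = (fun j => ((c j : ℝ))) - (fun j => ((c' j : ℝ))) := rfl
      rw [this, Matrix.mulVec_sub]
      have := h1
      simp only [fA] at this
      rw [this, sub_self]
    · intro j hj
      have hcj : c j = 0 := by
        by_contra hne
        exact hj (by simp [hS, hne])
      have hcj' : c' j = 0 := (h3 j).mp hcj
      simp [hβdef, hcj, hcj']
  have hzero := key β hβ
  have hnonneg : ∀ j ∈ Finset.univ (α := Fin n),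
      0 ≤ β j * (Real.log (c j) - Real.log (c' j)) := by
    intro j _
    by_cases hcj : c j = 0
    · have hcj' := (h3 j).mp hcj
      simp [hβdef, hcj, hcj']
    · have hcj' : c' j ≠ 0 := fun hz => hcj ((h3 j).mpr hz)
      have hx : (0:ℝ) < c j := by exact_mod_cast pos_iff_ne_zero.mpr hcj
      have hy : (0:ℝ) < c' j := by exact_mod_cast pos_iff_ne_zero.mpr hcj'
      show (0:ℝ) ≤ ((c j : ℝ) - (c' j : ℝ)) * (Real.log (c j) - Real.log (c' j))
      rcases le_total ((c j : ℝ)) ((c' j : ℝ)) with hle | hle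
      · have hlog : Real.log (c j) ≤ Real.log (c' j) := Real.log_le_log hx hle
        nlinarith
      · have hlog : Real.log (c' j) ≤ Real.log (c j) := Real.log_le_log hy hle
        nlinarith
  have hall := (Finset.sum_eq_zero_iff_of_nonneg hnonneg).mp hzero
  funext j
  by_cases hcj : c j = 0
  · rw [hcj, (h3 j).mp hcj]
  · have hcj' : c' j ≠ 0 := fun hz => hcj ((h3 j).mpr hz)
    have hx : (0:ℝ) < c j := by exact_mod_cast pos_iff_ne_zero.mpr hcj
    have hy : (0:ℝ) < c' j := by exact_mod_cast pos_iff_ne_zero.mpr hcj'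
    have hj0 : ((c j : ℝ) - (c' j : ℝ)) * (Real.log (c j) - Real.log (c' j)) = 0 :=
      hall j (Finset.mem_univ j)
    rcases mul_eq_zero.mp hj0 with hb | hl
    · exact NNReal.coe_injective (by linarith [sub_eq_zero.mp hb] : ((c j : ℝ)) = c' j)
    · have := Real.log_injOn_pos (Set.mem_Ioi.mpr hx) (Set.mem_Ioi.mpr hy)
        (sub_eq_zero.mp hl)
      exact NNReal.coe_injective this

lemma comap_pair {δ α β : Type*} [mα : MeasurableSpace α] [mβ : MeasurableSpace β]
    (f : δ → α) (g : δ → β) :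
    MeasurableSpace.comap (fun x => (f x, g x))
        (inferInstance : MeasurableSpace (α × β))
      = MeasurableSpace.comap f mα ⊔ MeasurableSpace.comap g mβ := by
  rw [show (inferInstance : MeasurableSpace (α × β))
      = mα.comap Prod.fst ⊔ mβ.comap Prod.snd from rfl,
    MeasurableSpace.comap_sup, MeasurableSpace.comap_comp, MeasurableSpace.comap_comp]
  rfl

lemma comap_pi {δ ι : Type*} {π : ι → Type*} [m : ∀ i, MeasurableSpace (π i)]
    (f : δ → ∀ i, π i) :
    MeasurableSpace.comap f (inferInstance : MeasurableSpace (∀ i, π i))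
      = ⨆ i, MeasurableSpace.comap (fun x => f x i) (m i) := by
  rw [show (inferInstance : MeasurableSpace (∀ i, π i))
      = ⨆ i, (m i).comap (fun b => b i) from rfl,
    MeasurableSpace.comap_iSup]
  simp only [MeasurableSpace.comap_comp]
  rfl

/-- The key Borel-σ-algebra comparison on `Θ`, via the Lusin–Suslin theorem. -/
lemma borel_le (A : Matrix (Fin d) (Fin n) ℤ) :
    (inferInstance : MeasurableSpace (Fin n → NNReal)) ≤
      MeasurableSpace.comap (fA A) (inferInstance : MeasurableSpace (Fin d → ℝ))
      ⊔ (⨆ α ∈ kerA A, MeasurableSpace.comap (Rfun α) (inferInstance : MeasurableSpace ℝ))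
      ⊔ MeasurableSpace.comap Zfun (inferInstance : MeasurableSpace (Fin n → ℝ)) := by
  have hemb : MeasurableEmbedding (Phi A) :=
    (measurable_Phi A).measurableEmbedding (injective_Phi A)
  have step1 : (inferInstance : MeasurableSpace (Fin n → NNReal)) ≤
      MeasurableSpace.comap (Phi A) inferInstance := by
    intro s hs
    exact ⟨Phi A '' s, hemb.measurableSet_image.mpr hs, hemb.injective.preimage_image s⟩
  refine step1.trans ?_
  have hPhi : Phi A = fun c =>
      (fA A c, ((fun t : {x // x ∈ Tset A} => Rfun (↑t) c), Zfun c)) := rfl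
  rw [hPhi, comap_pair, comap_pair, comap_pi]
  refine sup_le (le_sup_left.trans le_sup_left) (sup_le ?_ le_sup_right)
  refine le_trans (le_of_eq (comap_pi (π := fun _ : {x // x ∈ Tset A} => ℝ)
    (fun (c : Fin n → NNReal) (t : {x // x ∈ Tset A}) => Rfun (t : Fin n → ℝ) c))) ?_
  refine (iSup_le fun t => ?_).trans
    ((le_sup_right.trans le_sup_left) : (⨆ α ∈ kerA A,
      MeasurableSpace.comap (Rfun α) (inferInstance : MeasurableSpace ℝ)) ≤ _)
  exact le_iSup₂ (f := fun (α : Fin n → ℝ) (_ : α ∈ kerA A) =>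
    MeasurableSpace.comap (Rfun α) (inferInstance : MeasurableSpace ℝ)) (↑t) (Tset_ker A t.2)

end SigmaAux

/-- For measurable `X : Ω → ℤ_{≥0}ⁿ` and surjective measurable
`θ : Ω → Θ = ℝ_{≥0}ⁿ`, the σ-algebra generated by `AX` and `θ` equals the σ-algebra
generated by the nuisance parameter `Aθ` together with `AX`, the generalized odds ratios
`R_α(θ)` (`α ∈ ker A`), and the zero pattern `Z(θ)`. -/
theorem sigma_AX_theta_eq_nuisance_interest {d n : ℕ}
    (A : Matrix (Fin d) (Fin n) ℤ) {Ω : Type*} [MeasurableSpace Ω]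
    (X : Ω → Fin n → ℕ) (θ : Ω → Fin n → NNReal)
    (hX : Measurable X) (hθ : Measurable θ) (hθsurj : Function.Surjective θ) :
    MeasurableSpace.comap
        (fun ω => (A.mulVec (fun j => ((X ω j : ℤ))), θ ω))
        (inferInstance : MeasurableSpace ((Fin d → ℤ) × (Fin n → NNReal))) =
      MeasurableSpace.comap
          (fun ω => (A.map (Int.cast : ℤ → ℝ)).mulVec (fun j => ((θ ω j : ℝ))))
          (inferInstance : MeasurableSpace (Fin d → ℝ)) ⊔
        MeasurableSpace.comap (fun ω => A.mulVec (fun j => ((X ω j : ℤ))))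
          (inferInstance : MeasurableSpace (Fin d → ℤ)) ⊔
        (⨆ α ∈ kerA A,
          MeasurableSpace.comap (fun ω => Rfun α (θ ω))
            (inferInstance : MeasurableSpace ℝ)) ⊔
        MeasurableSpace.comap (fun ω => Zfun (θ ω))
          (inferInstance : MeasurableSpace (Fin n → ℝ)) := by
  classical
  rw [SigmaAux.comap_pair (fun ω => A.mulVec (fun j => ((X ω j : ℤ)))) θ]
  -- identifications of composite comaps
  have hfA : MeasurableSpace.comap
      (fun ω => (A.map (Int.cast : ℤ → ℝ)).mulVec (fun j => ((θ ω j : ℝ))))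
      (inferInstance : MeasurableSpace (Fin d → ℝ))
      = MeasurableSpace.comap θ (MeasurableSpace.comap (SigmaAux.fA A)
          (inferInstance : MeasurableSpace (Fin d → ℝ))) :=
    (MeasurableSpace.comap_comp (f := SigmaAux.fA A) (g := θ)).symm
  have hRα : ∀ α : Fin n → ℝ, MeasurableSpace.comap (fun ω => Rfun α (θ ω))
      (inferInstance : MeasurableSpace ℝ)
      = MeasurableSpace.comap θ (MeasurableSpace.comap (Rfun α)
          (inferInstance : MeasurableSpace ℝ)) := fun α =>
    (MeasurableSpace.comap_comp (f := Rfun α) (g := θ)).symm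
  have hZ : MeasurableSpace.comap (fun ω => Zfun (θ ω))
      (inferInstance : MeasurableSpace (Fin n → ℝ))
      = MeasurableSpace.comap θ (MeasurableSpace.comap Zfun
          (inferInstance : MeasurableSpace (Fin n → ℝ))) :=
    (MeasurableSpace.comap_comp (f := Zfun) (g := θ)).symm
  apply le_antisymm
  · refine sup_le ?_ ?_
    · -- the AX part
      exact (le_sup_right.trans le_sup_left).trans le_sup_left
    · -- the θ part, via the Borel comparison on Θ
      refine (MeasurableSpace.comap_mono (SigmaAux.borel_le A)).trans ?_
      rw [MeasurableSpace.comap_sup, MeasurableSpace.comap_sup, MeasurableSpace.comap_iSup]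
      simp only [MeasurableSpace.comap_iSup]
      refine sup_le (sup_le ?_ ?_) ?_
      · rw [← hfA]
        exact (le_sup_left.trans le_sup_left).trans le_sup_left
      · refine (iSup_le fun α => iSup_le fun hα => ?_).trans
          (le_sup_right.trans le_sup_left : (⨆ α ∈ kerA A,
            MeasurableSpace.comap (fun ω => Rfun α (θ ω))
              (inferInstance : MeasurableSpace ℝ)) ≤ _)
        rw [← hRα α]
        exact le_iSup₂ (f := fun (α : Fin n → ℝ) (_ : α ∈ kerA A) =>
          MeasurableSpace.comap (fun ω => Rfun α (θ ω))
            (inferInstance : MeasurableSpace ℝ)) α hα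
      · rw [← hZ]
        exact le_sup_right
  · refine sup_le (sup_le (sup_le ?_ ?_) ?_) ?_
    · -- Aθ part ≤ σ(θ)
      rw [hfA]
      exact le_sup_of_le_right (MeasurableSpace.comap_mono
        (measurable_iff_comap_le.mp (SigmaAux.measurable_fA A)))
    · -- AX part
      exact le_sup_left
    · -- R_α parts ≤ σ(θ)
      refine iSup_le fun α => iSup_le fun _ => ?_
      rw [hRα α]
      exact le_sup_of_le_right (MeasurableSpace.comap_mono
        (measurable_iff_comap_le.mp (SigmaAux.measurable_Rfun α)))
    · -- Z part ≤ σ(θ)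
      rw [hZ]
      exact le_sup_of_le_right (MeasurableSpace.comap_mono
        (measurable_iff_comap_le.mp SigmaAux.measurable_Zfun))
end
end

section
/- Let F : ℝⁿ → ℝᵈ be a linear map and ι : ℝ_{>0}ⁿ → ℝⁿ the inclusion. For α ∈ ker F, define R_α : ℝ_{>0}ⁿ → ℝ by R_α(x) := ∏_{i=1}^n x_i^{α_i}. Then B(ℝ_{>0}ⁿ) = σ(F ∘ ι, R_α : α ∈ ker F); that is, the Borel σ-algebra of the positive orthant ℝ_{>0}ⁿ is generated by the map F ∘ ι together with the monomial functions R_α for α ∈ ker F. -/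
open MeasureTheory

-- helper: strict monotonicity argument
lemma key_pos {a b : ℝ} (ha : 0 < a) (hb : 0 < b)
    (h : (a - b) * (Real.log a - Real.log b) = 0) : a = b := by
  rcases lt_trichotomy a b with hl | he | hg
  · have := Real.log_lt_log ha hl
    nlinarith
  · exact he
  · have := Real.log_lt_log hb hg
    nlinarith

/-- Let `F : ℝⁿ → ℝᵈ` be linear and `ι` the inclusion of the open
positive orthant `ℝ_{>0}ⁿ` into `ℝⁿ`.  The Borel σ-algebra of `ℝ_{>0}ⁿ` is generated by
`F ∘ ι` together with the monomial functions `R_α(x) = ∏ᵢ xᵢ^{αᵢ}` for `α ∈ ker F`. -/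
theorem borel_posOrthant_eq_generated {d n : ℕ}
    (F : (Fin n → ℝ) →ₗ[ℝ] (Fin d → ℝ)) :
    (inferInstance : MeasurableSpace {x : Fin n → ℝ // ∀ i, 0 < x i}) =
      MeasurableSpace.comap (fun x : {x : Fin n → ℝ // ∀ i, 0 < x i} => F x.1)
          (inferInstance : MeasurableSpace (Fin d → ℝ)) ⊔
        ⨆ α ∈ {α : Fin n → ℝ | F α = 0},
          MeasurableSpace.comap
            (fun x : {x : Fin n → ℝ // ∀ i, 0 < x i} => ∏ i, (x.1 i) ^ (α i))
            (inferInstance : MeasurableSpace ℝ) := by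
  set Ω := {x : Fin n → ℝ // ∀ i, 0 < x i}
  haveI hP : PolishSpace Ω := by
    have h1 : {x : Fin n → ℝ | ∀ i, 0 < x i} = ⋂ i, (fun x : Fin n → ℝ => x i) ⁻¹' Set.Ioi 0 := by
      ext x; simp
    have : IsOpen {x : Fin n → ℝ | ∀ i, 0 < x i} := by
      rw [h1]; exact isOpen_iInter_of_finite fun i => isOpen_Ioi.preimage (continuous_apply i)
    exact this.polishSpace
  haveI hB : BorelSpace Ω := Subtype.borelSpace {x : Fin n → ℝ | ∀ i, 0 < x i}
  set K := LinearMap.ker F with hK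
  set k := Module.finrank ℝ K with hk
  let b : Module.Basis (Fin k) ℝ K := Module.finBasis ℝ K
  set Φ : Ω → (Fin d → ℝ) × (Fin k → ℝ) :=
    fun x => (F x.1, fun j => ∏ i, (x.1 i) ^ ((b j : Fin n → ℝ) i)) with hΦdef
  have hcont : Continuous Φ := by
    apply Continuous.prodMk
    · exact F.continuous_of_finiteDimensional.comp continuous_subtype_val
    · apply continuous_pi
      intro j
      apply continuous_finset_prod
      intro i _
      exact Continuous.rpow_const
        ((continuous_apply i).comp continuous_subtype_val)
        (fun x => Or.inl (x.2 i).ne')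
  have hinj : Function.Injective Φ := by
    intro x y hxy
    have h1 : F x.1 = F y.1 := congrArg Prod.fst hxy
    have h2 : ∀ j, (∏ i, (x.1 i) ^ ((b j : Fin n → ℝ) i)) = ∏ i, (y.1 i) ^ ((b j : Fin n → ℝ) i) :=
      fun j => congrFun (congrArg Prod.snd hxy) j
    set c : Fin n → ℝ := fun i => Real.log (x.1 i) - Real.log (y.1 i) with hc
    -- linear functional
    set M : (Fin n → ℝ) →ₗ[ℝ] ℝ := ∑ i, c i • LinearMap.proj i with hM
    have hMv : ∀ v : Fin n → ℝ, M v = ∑ i, c i * v i := by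
      intro v
      simp [hM, LinearMap.sum_apply, LinearMap.smul_apply, LinearMap.proj_apply, smul_eq_mul]
    have hMb : ∀ j, M (b j : Fin n → ℝ) = 0 := by
      intro j
      have hlog : (∑ i, ((b j : Fin n → ℝ) i) * Real.log (x.1 i))
          = ∑ i, ((b j : Fin n → ℝ) i) * Real.log (y.1 i) := by
        have hx : Real.log (∏ i, (x.1 i) ^ ((b j : Fin n → ℝ) i))
            = ∑ i, ((b j : Fin n → ℝ) i) * Real.log (x.1 i) := by
          rw [Real.log_prod]
          · exact Finset.sum_congr rfl fun i _ => Real.log_rpow (x.2 i) _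
          · exact fun i _ => (Real.rpow_pos_of_pos (x.2 i) _).ne'
        have hy : Real.log (∏ i, (y.1 i) ^ ((b j : Fin n → ℝ) i))
            = ∑ i, ((b j : Fin n → ℝ) i) * Real.log (y.1 i) := by
          rw [Real.log_prod]
          · exact Finset.sum_congr rfl fun i _ => Real.log_rpow (y.2 i) _
          · exact fun i _ => (Real.rpow_pos_of_pos (y.2 i) _).ne'
        rw [← hx, ← hy, h2 j]
      rw [hMv]
      simp only [hc]
      have : ∑ i, ((b j : Fin n → ℝ) i) * (Real.log (x.1 i) - Real.log (y.1 i))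
          = (∑ i, ((b j : Fin n → ℝ) i) * Real.log (x.1 i))
            - ∑ i, ((b j : Fin n → ℝ) i) * Real.log (y.1 i) := by
        rw [← Finset.sum_sub_distrib]
        exact Finset.sum_congr rfl fun i _ => by ring
      rw [show (fun i => c i * (b j : Fin n → ℝ) i) = fun i => ((b j : Fin n → ℝ) i) * c i from
        funext fun i => mul_comm _ _] at *
      simp only [hc] at *
      rw [this, hlog, sub_self]
    have hMK : M.comp K.subtype = 0 := b.ext fun j => hMb j
    have hz : x.1 - y.1 ∈ K := by
      rw [hK, LinearMap.mem_ker, map_sub, h1, sub_self]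
    have hMz : M (x.1 - y.1) = 0 := by
      have := congrFun (congrArg (fun f => f.toFun) hMK) ⟨x.1 - y.1, hz⟩
      simpa using this
    rw [hMv] at hMz
    -- each term equals zero
    have hterm : ∀ i ∈ Finset.univ, (0:ℝ) ≤ (x.1 i - y.1 i) * c i := by
      intro i _
      rcases lt_trichotomy (x.1 i) (y.1 i) with hl | he | hg
      · have := Real.log_lt_log (x.2 i) hl
        simp only [hc]; nlinarith
      · simp [hc, he]
      · have := Real.log_lt_log (y.2 i) hg
        simp only [hc]; nlinarith
    have hsum : ∑ i, (x.1 i - y.1 i) * c i = 0 := by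
      have heq : ∑ i, (x.1 i - y.1 i) * c i = ∑ i, c i * (x.1 - y.1) i :=
        Finset.sum_congr rfl fun i _ => by simp [Pi.sub_apply]; ring
      rw [heq, hMz]
    have hall := (Finset.sum_eq_zero_iff_of_nonneg hterm).1 hsum
    apply Subtype.ext
    funext i
    exact key_pos (x.2 i) (y.2 i) (by simpa [hc] using hall i (Finset.mem_univ i))
  have hΦemb : MeasurableEmbedding Φ := hcont.measurableEmbedding hinj
  apply le_antisymm
  · -- LHS ≤ comap Φ ≤ RHS
    have step1 : (inferInstance : MeasurableSpace Ω) ≤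
        MeasurableSpace.comap Φ inferInstance := by
      intro s hs
      exact ⟨Φ '' s, hΦemb.measurableSet_image.2 hs,
        Set.preimage_image_eq s hΦemb.injective⟩
    refine step1.trans ?_
    have hprod : (inferInstance : MeasurableSpace ((Fin d → ℝ) × (Fin k → ℝ)))
        = MeasurableSpace.comap Prod.fst inferInstance ⊔
          MeasurableSpace.comap Prod.snd inferInstance := rfl
    have hpi : (inferInstance : MeasurableSpace (Fin k → ℝ))
        = ⨆ j, MeasurableSpace.comap (fun f : Fin k → ℝ => f j) inferInstance := rfl
    rw [hprod, MeasurableSpace.comap_sup, MeasurableSpace.comap_comp,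
      hpi, MeasurableSpace.comap_iSup]
    apply sup_le
    · exact le_sup_left
    · refine le_trans ?_ le_sup_right
      rw [MeasurableSpace.comap_iSup]
      apply iSup_le
      intro j
      rw [MeasurableSpace.comap_comp, MeasurableSpace.comap_comp]
      have hmem : ((b j : Fin n → ℝ)) ∈ {α : Fin n → ℝ | F α = 0} := (b j).2
      exact le_biSup
        (fun α => MeasurableSpace.comap
          (fun x : Ω => ∏ i, (x.1 i) ^ (α i)) inferInstance) hmem
  · apply sup_le
    · exact Measurable.comap_le
        (F.continuous_of_finiteDimensional.comp continuous_subtype_val).measurable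
    · apply iSup_le; intro α; apply iSup_le; intro _
      apply Measurable.comap_le
      apply Finset.measurable_prod
      intro i _
      exact (Continuous.rpow_const
        ((continuous_apply i).comp continuous_subtype_val)
        (fun x => Or.inl (x.2 i).ne')).measurable
end
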